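/- arXiv:1604.04874 — 7 statements merged into one kernel-verified Lean document; each statement's English description precedes it below -/
import Mathlib

section
/- Let ψ₁, ψ₂ ∈ D_ℝ and set (φᵢ, ηᵢ) = Γ[ψᵢ] for i = 1, 2. If the function ψ₂ − ψ₁ is nonnegative and nondecreasing on [0,∞), then η₁ − η₂ is nonnegative and nondecreasing on [0,∞), and φ₂(t) ≥ φ₁(t) for all t ≥ 0. -/
/-! `Γ₂[ψ](t) = sup_{[0,t]} (-ψ)⁺` is the least `c ≥ 0` with `-ψ ≤ c` on `[0,t]` (the supremum
is finite because a càdlàg path is bounded below on compact intervals). Each claim is proved by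
exhibiting such a `c`: `Γ₂[ψ₁](t)` for `Γ₂[ψ₂](t)`, and `Γ₂[ψ₂](t) + δ(t)` for `Γ₂[ψ₁](t)`,
where `δ = ψ₂ - ψ₁`. For the monotonicity of `Γ₂[ψ₁] - Γ₂[ψ₂]` on `s ≤ t`, the candidate
`Γ₂[ψ₂](s) + Γ₂[ψ₁](t) - Γ₂[ψ₁](s)` dominates `-ψ₂` on `[0,s]` trivially, and on `[s,t]`
because `δ` has only grown since `s` while `Γ₂[ψ₁](s) - Γ₂[ψ₂](s) ≤ δ(s)`. -/

open MeasureTheory Filter Set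
open scoped NNReal ENNReal BoundedContinuousFunction Topology

noncomputable section

/-- Càdlàg on `[0,∞)`: right-continuous at every `t ≥ 0`, with left limits at
every `t > 0` (along `[0,t)`). -/
def CadlagOn {E : Type*} [TopologicalSpace E] (f : ℝ → E) : Prop :=
  (∀ t : ℝ, 0 ≤ t → ContinuousWithinAt f (Set.Ici t) t) ∧
  (∀ t : ℝ, 0 < t → ∃ l : E, Filter.Tendsto f (nhdsWithin t (Set.Ico 0 t)) (nhds l))

/-- `D_ℝ`: real-valued càdlàg paths on `[0,∞)`. -/
def DR (f : ℝ → ℝ) : Prop := CadlagOn f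

/-- `D_ℝ^↑`: nonnegative nondecreasing real-valued càdlàg paths on `[0,∞)`. -/
def DRup (f : ℝ → ℝ) : Prop :=
  CadlagOn f ∧ (∀ t : ℝ, 0 ≤ t → 0 ≤ f t) ∧ MonotoneOn f (Set.Ici 0)

/-- `D_M`: càdlàg paths with values in the space of finite nonnegative measures
on `[0,∞)`, equipped with the topology of weak convergence. -/
def DM (ζ : ℝ → FiniteMeasure ℝ≥0) : Prop := CadlagOn ζ

/-- `D_M^↑`: paths in `D_M` such that `t ↦ ∫ f dζ_t` is nondecreasing for every
nonnegative bounded continuous `f` on `[0,∞)`. -/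
def DMup (ζ : ℝ → FiniteMeasure ℝ≥0) : Prop :=
  CadlagOn ζ ∧
  ∀ f : ℝ≥0 →ᵇ ℝ≥0, MonotoneOn (fun t => (ζ t).testAgainstNN f) (Set.Ici 0)

/-- First component of the Skorokhod map on the half-line:
`Γ₁[ψ](t) = ψ(t) − inf_{s∈[0,t]} (ψ(s) ∧ 0)`. -/
def Gamma1 (ψ : ℝ → ℝ) (t : ℝ) : ℝ :=
  ψ t - sInf ((fun s => min (ψ s) 0) '' Set.Icc 0 t)

/-- Second component of the Skorokhod map on the half-line: `Γ₂[ψ] = Γ₁[ψ] − ψ`. -/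
def Gamma2 (ψ : ℝ → ℝ) (t : ℝ) : ℝ := Gamma1 ψ t - ψ t

/-- Extension of `g : [0,∞) → ℝ` by `0` on `(-∞,0)`. -/
def lsExt (g : ℝ → ℝ) : ℝ → ℝ := fun t => if t < 0 then 0 else g t

/- The Lebesgue–Stieltjes measure `m^g(B) = g(0)δ₀(B) + ∫_{(0,∞)} 1_B dg` of a
nonnegative nondecreasing right-continuous `g` on `[0,∞)`, realized as the
Stieltjes measure of the extension of `g` by `0` on `(-∞,0)`. -/
open scoped Classical in
def lsMeasure (g : ℝ → ℝ) : Measure ℝ :=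
  if h : Monotone (lsExt g) ∧ ∀ t, ContinuousWithinAt (lsExt g) (Set.Ici t) t then
    StieltjesFunction.measure ⟨lsExt g, h.1, h.2⟩
  else 0

/-- The measure-valued Skorokhod problem (MVSP): `(ξ,β,ι)` solves the MVSP for
the data `(α,μ)`. -/
def SolvesMVSP (α : ℝ → FiniteMeasure ℝ≥0) (μ : ℝ → ℝ)
    (ξ β : ℝ → FiniteMeasure ℝ≥0) (ι : ℝ → ℝ) : Prop :=
  (∀ x : ℝ≥0, ∀ t : ℝ, 0 ≤ t →
    (ξ t (Set.Iic x) : ℝ) = (α t (Set.Iic x) : ℝ) - μ t + (β t (Set.Ioi x) : ℝ) + ι t) ∧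
  (∀ x : ℝ≥0, ∀ᵐ t ∂(lsMeasure (fun s => (β s (Set.Ioi x) : ℝ))), (ξ t (Set.Iic x) : ℝ) = 0) ∧
  (∀ x : ℝ≥0, ∀ᵐ t ∂(lsMeasure ι), (ξ t (Set.Iic x) : ℝ) = 0) ∧
  (∀ t : ℝ, 0 ≤ t → (β t Set.univ : ℝ) + ι t = μ t)

/-- System (30): `(ξ,β,ι)` solves the MVSP for `(α, μ+ρ)` and `ξ_t[0,t) = 0`
for every `t > 0`. -/
def Solves30 (α : ℝ → FiniteMeasure ℝ≥0) (μ : ℝ → ℝ)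
    (ξ β : ℝ → FiniteMeasure ℝ≥0) (ι ρ : ℝ → ℝ) : Prop :=
  SolvesMVSP α (fun t => μ t + ρ t) ξ β ι ∧
  ∀ t : ℝ, 0 < t → (ξ t (Set.Iio (Real.toNNReal t)) : ℝ) = 0

/-- A minimal solution of system (30): a solution (lying in the appropriate
path spaces) whose reneging function `ρ` is pointwise below that of any other
solution. -/
def IsMinimalSol30 (α : ℝ → FiniteMeasure ℝ≥0) (μ : ℝ → ℝ)
    (ξ β : ℝ → FiniteMeasure ℝ≥0) (ι ρ : ℝ → ℝ) : Prop :=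
  (DM ξ ∧ DMup β ∧ DRup ι ∧ DRup ρ ∧ Solves30 α μ ξ β ι ρ) ∧
  ∀ (ξ' β' : ℝ → FiniteMeasure ℝ≥0) (ι' ρ' : ℝ → ℝ),
    DM ξ' → DMup β' → DRup ι' → DRup ρ' → Solves30 α μ ξ' β' ι' ρ' →
    ∀ t : ℝ, 0 ≤ t → ρ t ≤ ρ' t

/-- The (topological) support of a finite measure on `[0,∞)`: the set of points
all of whose open neighborhoods have positive measure. -/
def measSupport (ν : FiniteMeasure ℝ≥0) : Set ℝ≥0 :=
  {x : ℝ≥0 | ∀ u : Set ℝ≥0, IsOpen u → x ∈ u → ν u ≠ 0}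

/-- `σ(ν) = inf supp[ν]`, with value `∞` when `ν = 0`. -/
def sigmaOf (ν : FiniteMeasure ℝ≥0) : ℝ≥0∞ :=
  sInf ((fun x : ℝ≥0 => (x : ℝ≥0∞)) '' measSupport ν)

/-- Assumption A on the data `(α,μ)`. -/
def AssumptionA (α : ℝ → FiniteMeasure ℝ≥0) (μ : ℝ → ℝ) : Prop :=
  (∃ (ξ0 : FiniteMeasure ℝ≥0) (a0 : ℝ → FiniteMeasure ℝ≥0)
      (lam : ℝ → ℝ) (ν : FiniteMeasure ℝ≥0),
    (∀ x : ℝ≥0, ξ0 {x} = 0) ∧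
    ContinuousOn a0 (Set.Ici 0) ∧ DMup a0 ∧
    (∀ t : ℝ, 0 ≤ t → ∀ x : ℝ≥0, a0 t {x} = 0) ∧
    Measurable lam ∧ (∀ s : ℝ, 0 ≤ s → 0 ≤ lam s) ∧
    (∀ t : ℝ, 0 ≤ t → α t = a0 t + ξ0) ∧
    (∀ t : ℝ, 0 ≤ t → ∀ x : ℝ≥0, (a0 t (Set.Iic x) : ℝ) =
      ∫ s in Set.Icc (0:ℝ) t,
        (if s ≤ (x:ℝ) then lam s * (ν (Set.Iic (Real.toNNReal ((x:ℝ) - s))) : ℝ) else 0)) ∧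
    (∀ t : ℝ, 0 ≤ t →
      Filter.Tendsto (fun x : ℝ≥0 =>
          sSup ((fun s => lam s * (ν (Set.Iic x) : ℝ)) '' Set.Icc (0:ℝ) t))
        (nhdsWithin 0 (Set.Ioi 0)) (nhds 0))) ∧
  (∃ μ0 m : ℝ → ℝ,
    ContinuousOn μ0 (Set.Ici 0) ∧ (∀ t : ℝ, 0 ≤ t → 0 ≤ μ0 t) ∧
    MonotoneOn μ0 (Set.Ici 0) ∧
    Measurable m ∧ (∀ s : ℝ, 0 ≤ s → 0 ≤ m s) ∧
    (∀ t : ℝ, 0 ≤ t → MeasureTheory.IntegrableOn m (Set.Icc 0 t)) ∧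
    (∀ t : ℝ, 0 ≤ t → 0 < sInf (m '' Set.Icc (0:ℝ) t)) ∧
    (∀ t : ℝ, 0 ≤ t → μ t = μ0 t + ∫ s in Set.Icc (0:ℝ) t, m s))

section Cadlag

variable {E : Type*} [LinearOrder E] [TopologicalSpace E] [OrderTopology E] {ψ : ℝ → E}

theorem CadlagOn.isBoundedUnder_ge (h : CadlagOn ψ) {x : ℝ} (hx : 0 ≤ x) :
    (𝓝[Ici 0] x).IsBoundedUnder (· ≥ ·) ψ := by
  have hleft : (𝓝[Ico 0 x] x).IsBoundedUnder (· ≥ ·) ψ := by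
    rcases hx.eq_or_lt with rfl | hx
    · exact ⟨ψ 0, by simp⟩
    · obtain ⟨l, hl⟩ := h.2 x hx
      exact hl.isBoundedUnder_ge
  rw [← Ico_union_Ici_eq_Ici hx, nhdsWithin_union, IsBoundedUnder, Filter.map_sup]
  exact isBounded_sup hleft (h.1 x hx).tendsto.isBoundedUnder_ge

theorem CadlagOn.bddBelow_image_Icc [Nonempty E] (h : CadlagOn ψ) (t : ℝ) :
    BddBelow (ψ '' Icc 0 t) := by
  refine isCompact_Icc.induction_on (p := fun s => BddBelow (ψ '' s)) (by simp)
    (fun s u hsu hu => hu.mono (image_mono hsu))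
    (fun s u hs hu => by simpa only [image_union] using hs.union hu) fun x hx => ?_
  obtain ⟨c, hc⟩ := (h.isBoundedUnder_ge hx.1).mono (nhdsWithin_mono x Icc_subset_Ici_self)
  exact ⟨{u | c ≤ ψ u}, eventually_map.1 hc, c, by rintro _ ⟨u, hu, rfl⟩; exact hu⟩

end Cadlag

section Skorokhod

variable {ψ ψ₁ ψ₂ : ℝ → ℝ} {s t c : ℝ}

theorem Gamma1_eq_Gamma2_add (ψ : ℝ → ℝ) (t : ℝ) : Gamma1 ψ t = Gamma2 ψ t + ψ t := by
  rw [Gamma2, sub_add_cancel]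

theorem Gamma2_le (ht : 0 ≤ t) (hc : 0 ≤ c) (h : ∀ u ∈ Icc 0 t, -ψ u ≤ c) :
    Gamma2 ψ t ≤ c := by
  rw [Gamma2, Gamma1, sub_sub_cancel_left, neg_le]
  refine le_csInf ((nonempty_Icc.2 ht).image _) ?_
  rintro _ ⟨u, hu, rfl⟩
  exact le_min (neg_le.1 (h u hu)) (neg_nonpos.2 hc)

theorem neg_min_le_Gamma2 (hb : BddBelow (ψ '' Icc 0 t)) (hs : s ∈ Icc 0 t) :
    -min (ψ s) 0 ≤ Gamma2 ψ t := by
  have hb' : BddBelow ((fun u => min (ψ u) 0) '' Icc 0 t) := by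
    simpa only [image_image, id] using (monotone_id.min monotone_const).map_bddBelow hb
  rw [Gamma2, Gamma1, sub_sub_cancel_left, neg_le_neg_iff]
  exact csInf_le hb' ⟨s, hs, rfl⟩

theorem neg_le_Gamma2 (hb : BddBelow (ψ '' Icc 0 t)) (hs : s ∈ Icc 0 t) : -ψ s ≤ Gamma2 ψ t :=
  (neg_le_neg (min_le_left _ _)).trans (neg_min_le_Gamma2 hb hs)

theorem Gamma2_nonneg (hb : BddBelow (ψ '' Icc 0 t)) (ht : 0 ≤ t) : 0 ≤ Gamma2 ψ t :=
  (neg_nonneg.2 (min_le_right _ _)).trans (neg_min_le_Gamma2 hb ⟨le_rfl, ht⟩)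

theorem Gamma2_mono (hb : BddBelow (ψ '' Icc 0 t)) (hs : 0 ≤ s) (hst : s ≤ t) :
    Gamma2 ψ s ≤ Gamma2 ψ t :=
  Gamma2_le hs (Gamma2_nonneg hb (hs.trans hst)) fun _ hu =>
    neg_le_Gamma2 hb ⟨hu.1, hu.2.trans hst⟩

theorem Gamma2_le_Gamma2_of_le (hb₁ : BddBelow (ψ₁ '' Icc 0 t)) (ht : 0 ≤ t)
    (h : ∀ u ∈ Icc 0 t, ψ₁ u ≤ ψ₂ u) : Gamma2 ψ₂ t ≤ Gamma2 ψ₁ t :=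
  Gamma2_le ht (Gamma2_nonneg hb₁ ht) fun u hu =>
    (neg_le_neg (h u hu)).trans (neg_le_Gamma2 hb₁ hu)

theorem Gamma2_le_Gamma2_add (hb₂ : BddBelow (ψ₂ '' Icc 0 t)) (ht : 0 ≤ t)
    (hδt : 0 ≤ ψ₂ t - ψ₁ t) (hδ : ∀ u ∈ Icc 0 t, ψ₂ u - ψ₁ u ≤ ψ₂ t - ψ₁ t) :
    Gamma2 ψ₁ t ≤ Gamma2 ψ₂ t + (ψ₂ t - ψ₁ t) :=
  Gamma2_le ht (add_nonneg (Gamma2_nonneg hb₂ ht) hδt) fun u hu => by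
    linarith [neg_le_Gamma2 hb₂ hu, hδ u hu]

theorem Gamma2_sub_Gamma2_mono (hb₁ : BddBelow (ψ₁ '' Icc 0 t)) (hb₂ : BddBelow (ψ₂ '' Icc 0 t))
    (hδ : MonotoneOn (fun u => ψ₂ u - ψ₁ u) (Icc 0 t)) (hδs : 0 ≤ ψ₂ s - ψ₁ s)
    (hs : 0 ≤ s) (hst : s ≤ t) :
    Gamma2 ψ₁ s - Gamma2 ψ₂ s ≤ Gamma2 ψ₁ t - Gamma2 ψ₂ t := by
  have ht := hs.trans hst
  have hb₂s := hb₂.mono (image_mono (Icc_subset_Icc_right hst))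
  have hs_mem : s ∈ Icc 0 t := ⟨hs, hst⟩
  have hgap : Gamma2 ψ₁ s ≤ Gamma2 ψ₂ s + (ψ₂ s - ψ₁ s) :=
    Gamma2_le_Gamma2_add hb₂s hs hδs fun u hu =>
      hδ ⟨hu.1, hu.2.trans hst⟩ hs_mem hu.2
  have hmono₁ := Gamma2_mono hb₁ hs hst
  suffices Gamma2 ψ₂ t ≤ Gamma2 ψ₂ s + (Gamma2 ψ₁ t - Gamma2 ψ₁ s) by linarith
  refine Gamma2_le ht (add_nonneg (Gamma2_nonneg hb₂s hs) (sub_nonneg.2 hmono₁)) fun u hu => ?_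
  rcases le_total u s with hus | hsu
  · linarith [neg_le_Gamma2 hb₂s ⟨hu.1, hus⟩]
  · linarith [neg_le_Gamma2 hb₁ hu, hδ hs_mem hu hsu]

end Skorokhod

/-- Monotonicity of the Skorokhod map on the half-line: if `ψ₂ − ψ₁` is
nonnegative and nondecreasing on `[0,∞)`, then `η₁ − η₂` is nonnegative and
nondecreasing on `[0,∞)` and `φ₂ ≥ φ₁` on `[0,∞)`. -/
theorem skorokhod_map_monotone
    (ψ₁ ψ₂ : ℝ → ℝ) (hψ₁ : DR ψ₁) (hψ₂ : DR ψ₂)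
    (hnonneg : ∀ t : ℝ, 0 ≤ t → 0 ≤ ψ₂ t - ψ₁ t)
    (hmono : MonotoneOn (fun t => ψ₂ t - ψ₁ t) (Set.Ici 0)) :
    (∀ t : ℝ, 0 ≤ t → 0 ≤ Gamma2 ψ₁ t - Gamma2 ψ₂ t) ∧
    MonotoneOn (fun t => Gamma2 ψ₁ t - Gamma2 ψ₂ t) (Set.Ici 0) ∧
    (∀ t : ℝ, 0 ≤ t → Gamma1 ψ₁ t ≤ Gamma1 ψ₂ t) := by
  have hb₁ := CadlagOn.bddBelow_image_Icc hψ₁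
  have hb₂ := CadlagOn.bddBelow_image_Icc hψ₂
  have hδ : ∀ t, MonotoneOn (fun u => ψ₂ u - ψ₁ u) (Icc 0 t) :=
    fun t => hmono.mono Icc_subset_Ici_self
  refine ⟨fun t ht => ?_, fun s hs t _ hst => ?_, fun t ht => ?_⟩
  · exact sub_nonneg.2 <| Gamma2_le_Gamma2_of_le (hb₁ t) ht fun u hu =>
      sub_nonneg.1 (hnonneg u hu.1)
  · exact Gamma2_sub_Gamma2_mono (hb₁ t) (hb₂ t) (hδ t) (hnonneg s hs) hs hst
  · have hgap := Gamma2_le_Gamma2_add (hb₂ t) ht (hnonneg t ht) fun u hu =>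
      hδ t hu ⟨ht, le_rfl⟩ hu.2
    rw [Gamma1_eq_Gamma2_add, Gamma1_eq_Gamma2_add]
    linarith

end
end

section
/- Let ψ ∈ D_ℝ and φ = Γ₁[ψ]. Then for every T ∈ [0,∞) and every t ≥ 0, φ(T + t) = Γ₁[φ(T) + ψ^T](t), where φ(T) + ψ^T denotes the function s ↦ φ(T) + ψ(T + s) − ψ(T). -/
open MeasureTheory Filter Set
open scoped NNReal ENNReal BoundedContinuousFunction Topology

noncomputable section

/-! Let `a ≤ 0` be the running infimum of `ψ ∧ 0` up to `T`. The infimum up to `T + t` is the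
minimum of `a` and the infimum over `[T, T + t]`, while the restarted path `φ(T) + ψ^T` is
`ψ(T + ·) - a`, whose reflection term is `min (ψ(T + s) ∧ 0) a - a`. Càdlàg paths are bounded
below on compacts, so all these infima are genuine. -/

theorem CadlagOn.exists_eventually_le {f : ℝ → ℝ} (hf : CadlagOn f) {x : ℝ} (hx : 0 ≤ x) :
    ∃ M, ∀ᶠ y in 𝓝[Ici 0] x, M ≤ f y := by
  have right : ∀ᶠ y in 𝓝[Ici x] x, f x - 1 ≤ f y :=
    (hf.1 x hx).eventually (eventually_ge_nhds (by linarith))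
  obtain ⟨M, left⟩ : ∃ M, ∀ᶠ y in 𝓝[Ico 0 x] x, M ≤ f y := by
    rcases hx.eq_or_lt with rfl | hx
    · exact ⟨0, by simp⟩
    · obtain ⟨l, hl⟩ := hf.2 x hx
      exact ⟨l - 1, hl.eventually (eventually_ge_nhds (by linarith))⟩
  have hsplit : 𝓝[Ici 0] x ≤ 𝓝[Ico 0 x] x ⊔ 𝓝[Ici x] x := by
    rw [← nhdsWithin_union]
    exact nhdsWithin_mono _ fun y (hy : 0 ≤ y) => (lt_or_ge y x).imp (⟨hy, ·⟩) id
  exact ⟨min M (f x - 1), hsplit (mem_sup.2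
    ⟨left.mono fun y hy => min_le_of_left_le hy, right.mono fun y hy => min_le_of_right_le hy⟩)⟩

theorem CadlagOn.bddBelow_image_Icc_s2 {f : ℝ → ℝ} (hf : CadlagOn f) (c : ℝ) :
    BddBelow (f '' Icc 0 c) := by
  refine isCompact_Icc.induction_on (p := fun s => BddBelow (f '' s)) (by simp)
    (fun s t hst ht => ht.mono (image_mono hst))
    (fun s t hs ht => by simpa only [image_union] using hs.union ht) fun x hx => ?_
  obtain ⟨M, hM⟩ := hf.exists_eventually_le hx.1
  exact ⟨{y | M ≤ f y}, nhdsWithin_mono _ Icc_subset_Ici_self hM,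
    M, forall_mem_image.2 fun _ hy => hy⟩

theorem csInf_image_Icc_eq_min {g : ℝ → ℝ} {a b c : ℝ} (hab : a ≤ b) (hbc : b ≤ c)
    (hg : BddBelow (g '' Icc a c)) :
    sInf (g '' Icc a c) = min (sInf (g '' Icc a b)) (sInf (g '' Icc b c)) := by
  rw [← Icc_union_Icc_eq_Icc hab hbc, image_union] at hg ⊢
  exact csInf_union (hg.mono subset_union_left) ((nonempty_Icc.2 hab).image g)
    (hg.mono subset_union_right) ((nonempty_Icc.2 hbc).image g)

theorem Gamma1_shift_of_bddBelow {ψ : ℝ → ℝ} {T t : ℝ} (hT : 0 ≤ T) (ht : 0 ≤ t)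
    (hψ : BddBelow (ψ '' Icc 0 (T + t))) :
    Gamma1 ψ (T + t) = Gamma1 (fun s => Gamma1 ψ T + (ψ (T + s) - ψ T)) t := by
  set m : ℝ → ℝ := fun s => min (ψ s) 0
  set a := sInf (m '' Icc 0 T)
  have hm : BddBelow (m '' Icc 0 (T + t)) := by
    obtain ⟨M, hM⟩ := hψ
    exact ⟨min M 0, forall_mem_image.2 fun s hs => min_le_min_right 0 (hM (mem_image_of_mem ψ hs))⟩
  have ha : a ≤ 0 :=
    (csInf_le (hm.mono (image_mono (Icc_subset_Icc_right (by linarith))))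
      (mem_image_of_mem m ⟨le_rfl, hT⟩)).trans (min_le_right _ _)
  set reflect : ℝ → ℝ := fun x => min x a - a
  have hreflect : Monotone reflect := fun x y hxy => sub_le_sub_right (min_le_min_right a hxy) a
  have hφT : Gamma1 ψ T = ψ T - a := rfl
  have hrestart (s : ℝ) : min (Gamma1 ψ T + (ψ (T + s) - ψ T)) 0 = reflect (m (T + s)) := by
    simp only [hφT, reflect, m, min_def]
    split_ifs <;> linarith
  have hshifted : (fun s => min (Gamma1 ψ T + (ψ (T + s) - ψ T)) 0) '' Icc 0 t =
      reflect '' (m '' Icc T (T + t)) := by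
    have hinterval : (T + ·) '' Icc 0 t = Icc T (T + t) := by
      rw [image_const_add_Icc, add_zero]
    rw [← hinterval, image_image, image_image]
    exact image_congr fun s _ => hrestart s
  calc Gamma1 ψ (T + t) = ψ (T + t) - min a (sInf (m '' Icc T (T + t))) :=
        congrArg (ψ (T + t) - ·) (csInf_image_Icc_eq_min hT (by linarith) hm)
    _ = Gamma1 ψ T + (ψ (T + t) - ψ T) - reflect (sInf (m '' Icc T (T + t))) := by
        rw [hφT, min_comm]
        ring
    _ = Gamma1 (fun s => Gamma1 ψ T + (ψ (T + s) - ψ T)) t := by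
        rw [hreflect.map_csInf_of_continuousAt (by fun_prop)
          ((nonempty_Icc.2 (by linarith)).image m) (hm.mono (image_mono (Icc_subset_Icc_left hT))),
          ← hshifted]
        rfl

/-- Shift property of the Skorokhod map on the half-line:
`φ(T + t) = Γ₁[φ(T) + ψ^T](t)` for all `T, t ≥ 0`. -/
theorem skorokhod_map_shift
    (ψ : ℝ → ℝ) (hψ : DR ψ) (T : ℝ) (hT : 0 ≤ T) (t : ℝ) (ht : 0 ≤ t) :
    Gamma1 ψ (T + t) = Gamma1 (fun s => Gamma1 ψ T + (ψ (T + s) - ψ T)) t :=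
  Gamma1_shift_of_bddBelow hT ht (CadlagOn.bddBelow_image_Icc_s2 hψ (T + t))

end
end

section
/- Let ζ ∈ D_M. Then ζ ∈ D_M^↑ if and only if for every 0 ≤ x < y, the function t ↦ ζ_t[0,x] is nonnegative, nondecreasing and càdlàg, and the function t ↦ ζ_t((x,y]) is nonnegative, nondecreasing and càdlàg. -/
open MeasureTheory Filter Set
open scoped NNReal ENNReal BoundedContinuousFunction Topology

noncomputable section

/-! Testing against all nonnegative bounded continuous functions orders finite measures on
`[0,∞)` exactly as setwise comparison does (closed sets are decreasing limits of such
functions, and finite measures are inner regular by closed sets), so `ζ ∈ D_M^↑` means that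
`t ↦ ζ_t` is monotone as a measure-valued path. Setwise monotonicity is in turn detected on
the sets `[0,x]` and `(x,y]`: if both comparisons hold, `x ↦ ζ_t[0,x] - ζ_s[0,x]` is
nonnegative, nondecreasing and right-continuous, hence the distribution function of a measure
`ρ` with `ζ_t = ζ_s + ρ`. For the càdlàg property, monotonicity gives left limits, and right
continuity of `t ↦ ζ_t[0,x]` comes from the portmanteau bound `limsup ζ_u[0,x] ≤ ζ_t[0,x]`
for the closed set `[0,x]`; `(x,y]` is handled as the difference of `[0,y]` and `[0,x]`. -/

namespace MeasureTheory

variable {Ω : Type*} [MeasurableSpace Ω] [TopologicalSpace Ω]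

lemma Measure.le_of_forall_lintegral_le [TopologicalSpace.PseudoMetrizableSpace Ω]
    [BorelSpace Ω] {μ ν : Measure Ω} [IsFiniteMeasure μ] [IsFiniteMeasure ν]
    (h : ∀ f : Ω →ᵇ ℝ≥0, ∫⁻ x, f x ∂μ ≤ ∫⁻ x, f x ∂ν) : μ ≤ ν := by
  have h_closed : ∀ F : Set Ω, IsClosed F → μ F ≤ ν F := fun F hF =>
    ge_of_tendsto (HasOuterApproxClosed.tendsto_lintegral_apprSeq hF ν) <|
      Eventually.of_forall fun n =>
        (HasOuterApproxClosed.measure_le_lintegral hF μ n).trans (h _)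
  refine Measure.le_iff.2 fun A hA => ?_
  rw [hA.measure_eq_iSup_isClosed_of_ne_top (measure_ne_top μ A)]
  exact iSup₂_le fun F hFA => iSup_le fun hF => (h_closed F hF).trans (measure_mono hFA)

namespace FiniteMeasure

lemma toMeasure_le_iff_testAgainstNN_le [TopologicalSpace.PseudoMetrizableSpace Ω]
    [BorelSpace Ω] {μ ν : FiniteMeasure Ω} :
    (μ : Measure Ω) ≤ ν ↔ ∀ f : Ω →ᵇ ℝ≥0, μ.testAgainstNN f ≤ ν.testAgainstNN f := by
  simp_rw [← ENNReal.coe_le_coe, testAgainstNN_coe_eq]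
  exact ⟨fun h f => lintegral_mono' h le_rfl, Measure.le_of_forall_lintegral_le⟩

lemma tendsto_apply_of_tendsto_of_le [HasOuterApproxClosed Ω] [OpensMeasurableSpace Ω]
    {ι : Type*} {L : Filter ι} {μs : ι → FiniteMeasure Ω} {μ : FiniteMeasure Ω}
    (hlim : Tendsto μs L (𝓝 μ)) (hle : ∀ᶠ i in L, (μ : Measure Ω) ≤ μs i)
    {F : Set Ω} (hF : IsClosed F) :
    Tendsto (fun i => (μs i F : ℝ)) L (𝓝 (μ F)) := by
  have h_ennreal : Tendsto (fun i => (μs i : Measure Ω) F) L (𝓝 ((μ : Measure Ω) F)) :=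
    tendsto_of_le_liminf_of_limsup_le
      (le_liminf_of_le (by isBoundedDefault) (hle.mono fun i hi => hi F))
      (limsup_measure_closed_le_of_tendsto hlim hF)
  simp_rw [← ennreal_coeFn_eq_coeFn_toMeasure, ENNReal.tendsto_coe] at h_ennreal
  exact NNReal.tendsto_coe.2 h_ennreal

end FiniteMeasure

lemma Measure.tendsto_measure_Iic_nhdsGT {α : Type*} [LinearOrder α] [TopologicalSpace α]
    [OrderTopology α] [DenselyOrdered α] [FirstCountableTopology α] [MeasurableSpace α]
    [OpensMeasurableSpace α] (μ : Measure α) [IsFiniteMeasure μ] (x : α) :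
    Tendsto (fun y => μ (Iic y)) (𝓝[>] x) (𝓝 (μ (Iic x))) := by
  have h_inter : (⋂ y > x, Iic y) = Iic x := by
    ext z
    simp only [mem_iInter, mem_Iic]
    exact ⟨fun hz => le_of_forall_gt_imp_ge_of_dense hz, fun hzx y hy => hzx.trans hy.le⟩
  obtain ⟨r, hr⟩ | h_top := (Ioi x).eq_empty_or_nonempty.symm
  · rw [← h_inter]
    exact tendsto_measure_biInter_gt (fun _ _ => measurableSet_Iic.nullMeasurableSet)
      (fun _ _ _ hij => Iic_subset_Iic.2 hij) ⟨r, hr, measure_ne_top μ _⟩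
  · simp [h_top]

lemma measureReal_Ioc_eq_sub {α : Type*} [LinearOrder α] [TopologicalSpace α]
    [OrderClosedTopology α] [MeasurableSpace α] [OpensMeasurableSpace α]
    (μ : Measure α) [IsFiniteMeasure μ] {x y : α} (hxy : x ≤ y) :
    μ.real (Ioc x y) = μ.real (Iic y) - μ.real (Iic x) := by
  rw [← Iic_sdiff_Iic, measureReal_sdiff (Iic_subset_Iic.2 hxy) measurableSet_Iic]

lemma Measure.le_of_measureReal_Iic_le_of_measureReal_Ioc_le {ν₁ ν₂ : Measure ℝ≥0}
    [IsFiniteMeasure ν₁] [IsFiniteMeasure ν₂]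
    (hIic : ∀ x, ν₁.real (Iic x) ≤ ν₂.real (Iic x))
    (hIoc : ∀ x y, x < y → ν₁.real (Ioc x y) ≤ ν₂.real (Ioc x y)) : ν₁ ≤ ν₂ := by
  set G : ℝ≥0 → ℝ := fun x => ν₂.real (Iic x) - ν₁.real (Iic x)
  have hG_mono : Monotone G := by
    intro x y hxy
    rcases hxy.eq_or_lt with rfl | hlt
    · exact le_rfl
    have := hIoc x y hlt
    rw [measureReal_Ioc_eq_sub ν₁ hxy, measureReal_Ioc_eq_sub ν₂ hxy] at this
    linarith
  have hG_rc : ∀ x, ContinuousWithinAt G (Ici x) x := by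
    intro x
    rw [← continuousWithinAt_Ioi_iff_Ici]
    have h_cdf : ∀ (ν : Measure ℝ≥0) [IsFiniteMeasure ν],
        Tendsto (fun y => ν.real (Iic y)) (𝓝[>] x) (𝓝 (ν.real (Iic x))) := fun ν _ =>
      (ENNReal.tendsto_toReal (measure_ne_top ν _)).comp (ν.tendsto_measure_Iic_nhdsGT x)
    exact (h_cdf ν₂).sub (h_cdf ν₁)
  let S : StieltjesFunction ℝ≥0 := ⟨G, hG_mono, hG_rc⟩
  have hS_Iic : ∀ x, S.measure (Iic x) = ENNReal.ofReal (G x - G 0) := fun x =>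
    S.measure_Iic (by rw [atBot_eq_pure_of_isBot isBot_bot]; exact tendsto_pure_nhds S ⊥) x
  -- `S.measure` charges `{0}` with nothing, so the mass `G 0` there is added separately.
  have h_decomp : ν₂ = ν₁ + S.measure + ENNReal.ofReal (G 0) • Measure.dirac 0 := by
    refine Measure.ext_of_Iic _ _ fun x => ?_
    have hx : (0 : ℝ≥0) ≤ x := zero_le
    have hG0 : 0 ≤ G 0 := sub_nonneg.2 (hIic 0)
    rw [Measure.add_apply, Measure.add_apply, hS_Iic, Measure.smul_apply,
      dirac_apply_of_mem (mem_Iic.2 hx), smul_eq_mul, mul_one, add_assoc,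
      ← ENNReal.ofReal_add (sub_nonneg.2 (hG_mono hx)) hG0, sub_add_cancel,
      ← ofReal_measureReal, ← ofReal_measureReal,
      ← ENNReal.ofReal_add measureReal_nonneg (sub_nonneg.2 (hIic x)), add_sub_cancel]
  rw [h_decomp, add_assoc]
  exact Measure.le_add_right le_rfl

end MeasureTheory

lemma CadlagOn.of_monotoneOn {f : ℝ → ℝ} (hf : MonotoneOn f (Ici 0))
    (hrc : ∀ t, 0 ≤ t → ContinuousWithinAt f (Ici t) t) : CadlagOn f :=
  ⟨hrc, fun t ht => ⟨_,
    ((hf.mono (Ioo_subset_Ioi_self.trans Ioi_subset_Ici_self)).tendsto_nhdsWithin_Ioo_left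
      (nonempty_Ioo.2 ht) ⟨f t, forall_mem_image.2 fun _ hs => hf hs.1.le ht.le hs.2.le⟩).mono_left
      (nhdsWithin_mono t Ico_subset_Iio_self)⟩⟩

section MeasurePath

variable {ζ : ℝ → FiniteMeasure ℝ≥0}

lemma dmup_iff_monotoneOn_toMeasure :
    DMup ζ ↔ CadlagOn ζ ∧ MonotoneOn (fun t => (ζ t : Measure ℝ≥0)) (Ici 0) := by
  simp only [DMup, MonotoneOn, FiniteMeasure.toMeasure_le_iff_testAgainstNN_le]
  exact and_congr_right fun _ => ⟨fun h s hs t ht hst f => h f hs ht hst,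
    fun h f s hs t ht hst => h hs ht hst f⟩

lemma drup_apply_of_monotoneOn (hmono : MonotoneOn (fun t => (ζ t : Measure ℝ≥0)) (Ici 0))
    {A : Set ℝ≥0} (hrc : ∀ t, 0 ≤ t → ContinuousWithinAt (fun u => (ζ u A : ℝ)) (Ici t) t) :
    DRup (fun t => (ζ t A : ℝ)) := by
  have h_mono : MonotoneOn (fun t => (ζ t A : ℝ)) (Ici 0) := fun s hs t ht hst =>
    ENNReal.toReal_mono (measure_ne_top _ A) (hmono hs ht hst A)
  exact ⟨.of_monotoneOn h_mono hrc, fun t _ => NNReal.coe_nonneg _, h_mono⟩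

lemma continuousWithinAt_apply_of_isClosed (hζ : CadlagOn ζ)
    (hmono : MonotoneOn (fun t => (ζ t : Measure ℝ≥0)) (Ici 0))
    {F : Set ℝ≥0} (hF : IsClosed F) {t : ℝ} (ht : 0 ≤ t) :
    ContinuousWithinAt (fun u => (ζ u F : ℝ)) (Ici t) t :=
  FiniteMeasure.tendsto_apply_of_tendsto_of_le (hζ.1 t ht)
    (eventually_nhdsWithin_of_forall fun _ hu => hmono ht (ht.trans hu) hu) hF

end MeasurePath

/-- A path `ζ ∈ D_M` lies in `D_M^↑` if and only if for every `0 ≤ x < y` the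
functions `t ↦ ζ_t[0,x]` and `t ↦ ζ_t((x,y])` are nonnegative, nondecreasing
and càdlàg. -/
theorem dmup_iff_intervals
    (ζ : ℝ → FiniteMeasure ℝ≥0) (hζ : DM ζ) :
    DMup ζ ↔
      ∀ x y : ℝ≥0, x < y →
        DRup (fun t => (ζ t (Set.Iic x) : ℝ)) ∧
        DRup (fun t => (ζ t (Set.Ioc x y) : ℝ)) := by
  rw [dmup_iff_monotoneOn_toMeasure]
  constructor
  · rintro ⟨-, hmono⟩ x y hxy
    have h_Iic : ∀ z : ℝ≥0, ∀ t, 0 ≤ t →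
        ContinuousWithinAt (fun u => (ζ u (Iic z) : ℝ)) (Ici t) t := fun _ _ ht =>
      continuousWithinAt_apply_of_isClosed hζ hmono isClosed_Iic ht
    refine ⟨drup_apply_of_monotoneOn hmono (h_Iic x), drup_apply_of_monotoneOn hmono fun t ht => ?_⟩
    have h_Ioc : (fun u => (ζ u (Ioc x y) : ℝ)) =
        fun u => (ζ u (Iic y) : ℝ) - (ζ u (Iic x) : ℝ) :=
      funext fun u => measureReal_Ioc_eq_sub (ζ u : Measure ℝ≥0) hxy.le
    rw [h_Ioc]
    exact (h_Iic y t ht).sub (h_Iic x t ht)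
  · refine fun h => ⟨hζ, fun s hs t ht hst =>
      Measure.le_of_measureReal_Iic_le_of_measureReal_Ioc_le (fun x => ?_) fun x y hxy => ?_⟩
    · exact (h x (x + 1) (lt_add_one x)).1.2.2 hs ht hst
    · exact (h x y hxy).2.2.2 hs ht hst

end
end

section
/- Let ζ : [0,∞) → M be right-continuous in the weak topology and such that t ↦ ∫ f dζ_t is nondecreasing for every nonnegative bounded continuous f on [0,∞). Then for every t ≥ 0, every x ≥ 0, and all sequences x_n ↓ x and y_n ↑ x in [0,∞), one has lim_{n→∞} sup_{s∈[0,t]} ζ_s((x, x_n]) = 0 and lim_{n→∞} sup_{s∈[0,t]} ζ_s((y_n, x)) = 0. -/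
open MeasureTheory Filter Set
open scoped NNReal ENNReal BoundedContinuousFunction Topology

noncomputable section

/-! Monotonicity of `t ↦ ∫ f dζ_t` over all bounded continuous `f ≥ 0` upgrades to setwise
monotonicity `ζ_s ≤ ζ_t` (closed sets are decreasing limits of such `f`, and finite measures on a
metrizable space are inner regular by closed sets). Hence `sup_{s ∈ [0,t]} ζ_s(S_n) ≤ ζ_t(S_n)`,
and for the shrinking intervals `S_n`, whose intersection is empty, the right-hand side tends to
`0` by continuity from above of the single finite measure `ζ_t`. -/

theorem MeasureTheory.Measure.le_of_forall_lintegral_le_s5 {Ω : Type*} [MeasurableSpace Ω]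
    [TopologicalSpace Ω] [TopologicalSpace.PseudoMetrizableSpace Ω] [BorelSpace Ω]
    {μ ν : Measure Ω} [IsFiniteMeasure μ] [IsFiniteMeasure ν]
    (h : ∀ f : Ω →ᵇ ℝ≥0, ∫⁻ x, f x ∂μ ≤ ∫⁻ x, f x ∂ν) : μ ≤ ν := by
  have closed_le : ∀ F : Set Ω, IsClosed F → μ F ≤ ν F := fun F hF =>
    le_of_tendsto_of_tendsto' (HasOuterApproxClosed.tendsto_lintegral_apprSeq hF μ)
      (HasOuterApproxClosed.tendsto_lintegral_apprSeq hF ν) fun n => h _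
  refine Measure.le_iff.2 fun A hA => ?_
  rw [hA.measure_eq_iSup_isClosed_of_ne_top (measure_ne_top μ A)]
  exact iSup₂_le fun F hFA => iSup_le fun hF => (closed_le F hF).trans (measure_mono hFA)

theorem MeasureTheory.FiniteMeasure.toMeasure_le_of_forall_testAgainstNN_le {Ω : Type*}
    [MeasurableSpace Ω] [TopologicalSpace Ω] [TopologicalSpace.PseudoMetrizableSpace Ω]
    [BorelSpace Ω] {μ ν : FiniteMeasure Ω}
    (h : ∀ f : Ω →ᵇ ℝ≥0, μ.testAgainstNN f ≤ ν.testAgainstNN f) :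
    (μ : Measure Ω) ≤ ν :=
  Measure.le_of_forall_lintegral_le_s5 fun f => by
    simpa only [← FiniteMeasure.testAgainstNN_coe_eq, ENNReal.coe_le_coe] using h f

theorem MeasureTheory.FiniteMeasure.apply_le_of_toMeasure_le {Ω : Type*} [MeasurableSpace Ω]
    {μ ν : FiniteMeasure Ω} (h : (μ : Measure Ω) ≤ ν) (s : Set Ω) : μ s ≤ ν s := by
  simpa only [← FiniteMeasure.ennreal_coeFn_eq_coeFn_toMeasure, ENNReal.coe_le_coe] using h s

theorem MeasureTheory.FiniteMeasure.tendsto_apply_atTop_of_iInter_eq_empty {Ω : Type*}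
    [MeasurableSpace Ω] (ν : FiniteMeasure Ω) {S : ℕ → Set Ω} (hSm : ∀ n, MeasurableSet (S n))
    (hS : Antitone S) (hempty : ⋂ n, S n = ∅) :
    Tendsto (fun n => ν (S n)) atTop (𝓝 0) := by
  have h := tendsto_measure_iInter_atTop (μ := (ν : Measure Ω))
    (fun n => (hSm n).nullMeasurableSet) hS ⟨0, measure_ne_top _ _⟩
  rw [hempty, measure_empty] at h
  refine ENNReal.tendsto_coe.1 ?_
  simpa only [Function.comp_def, FiniteMeasure.ennreal_coeFn_eq_coeFn_toMeasure, ENNReal.coe_zero]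
    using h

theorem tendsto_sSup_image_apply_of_le {ι Ω : Type*} [MeasurableSpace Ω]
    (ζ : ι → FiniteMeasure Ω) (ν : FiniteMeasure Ω) (I : Set ι)
    (hle : ∀ s ∈ I, (ζ s : Measure Ω) ≤ ν) {S : ℕ → Set Ω} (hSm : ∀ n, MeasurableSet (S n))
    (hS : Antitone S) (hempty : ⋂ n, S n = ∅) :
    Tendsto (fun n => sSup ((fun s => (ζ s (S n) : ℝ)) '' I)) atTop (𝓝 0) := by
  have hν : Tendsto (fun n => (ν (S n) : ℝ)) atTop (𝓝 0) := by
    simpa using NNReal.tendsto_coe.2 (ν.tendsto_apply_atTop_of_iInter_eq_empty hSm hS hempty)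
  refine tendsto_of_tendsto_of_tendsto_of_le_of_le tendsto_const_nhds hν
    (fun n => Real.sSup_nonneg ?_) (fun n => Real.sSup_le ?_ (ν (S n)).coe_nonneg)
  · rintro _ ⟨s, -, rfl⟩
    exact (ζ s (S n)).coe_nonneg
  · rintro _ ⟨s, hs, rfl⟩
    exact NNReal.coe_le_coe.2 (FiniteMeasure.apply_le_of_toMeasure_le (hle s hs) _)

theorem Set.iInter_Ioc_eq_empty_of_tendsto {ι α : Type*} [LinearOrder α] [TopologicalSpace α]
    [OrderClosedTopology α] {l : Filter ι} [l.NeBot] {u : ι → α} {x : α}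
    (hu : Tendsto u l (𝓝 x)) : ⋂ i, Ioc x (u i) = ∅ := by
  have : Nonempty ι := l.nonempty_of_neBot
  refine eq_empty_of_forall_notMem fun y hy => ?_
  rw [mem_iInter] at hy
  exact (hy (Classical.arbitrary ι)).1.not_ge (ge_of_tendsto' hu fun i => (hy i).2)

theorem Set.iInter_Ioo_eq_empty_of_tendsto {ι α : Type*} [LinearOrder α] [TopologicalSpace α]
    [OrderClosedTopology α] {l : Filter ι} [l.NeBot] {u : ι → α} {x : α}
    (hu : Tendsto u l (𝓝 x)) : ⋂ i, Ioo (u i) x = ∅ := by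
  have : Nonempty ι := l.nonempty_of_neBot
  refine eq_empty_of_forall_notMem fun y hy => ?_
  rw [mem_iInter] at hy
  exact (hy (Classical.arbitrary ι)).2.not_ge (le_of_tendsto' hu fun i => (hy i).1.le)

theorem thin_interval_mass_vanishes_general
    (ζ : ℝ → FiniteMeasure ℝ≥0)
    (hmono : ∀ f : ℝ≥0 →ᵇ ℝ≥0, MonotoneOn (fun t => (ζ t).testAgainstNN f) (Set.Ici 0))
    (t : ℝ) (x : ℝ≥0) :
    (∀ xn : ℕ → ℝ≥0, Antitone xn → Filter.Tendsto xn Filter.atTop (nhds x) →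
      Filter.Tendsto
        (fun n => sSup ((fun s => (ζ s (Set.Ioc x (xn n)) : ℝ)) '' Set.Icc 0 t))
        Filter.atTop (nhds 0)) ∧
    (∀ yn : ℕ → ℝ≥0, Monotone yn → Filter.Tendsto yn Filter.atTop (nhds x) →
      Filter.Tendsto
        (fun n => sSup ((fun s => (ζ s (Set.Ioo (yn n) x) : ℝ)) '' Set.Icc 0 t))
        Filter.atTop (nhds 0)) := by
  have hle : ∀ s ∈ Icc 0 t, (ζ s : Measure ℝ≥0) ≤ ζ t := fun s hs =>
    FiniteMeasure.toMeasure_le_of_forall_testAgainstNN_le fun f =>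
      hmono f hs.1 (hs.1.trans hs.2) hs.2
  refine ⟨fun xn hxn hlim => ?_, fun yn hyn hlim => ?_⟩
  · exact tendsto_sSup_image_apply_of_le ζ (ζ t) _ hle (fun _ => measurableSet_Ioc)
      (fun _ _ hmn => Ioc_subset_Ioc_right (hxn hmn)) (iInter_Ioc_eq_empty_of_tendsto hlim)
  · exact tendsto_sSup_image_apply_of_le ζ (ζ t) _ hle (fun _ => measurableSet_Ioo)
      (fun _ _ hmn => Ioo_subset_Ioo_left (hyn hmn)) (iInter_Ioo_eq_empty_of_tendsto hlim)

/-- For a right-continuous nondecreasing measure-valued path `ζ`, the masses of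
the thin intervals `(x, x_n]` and `(y_n, x)` vanish uniformly on `[0,t]` as
`x_n ↓ x` and `y_n ↑ x`. -/
theorem thin_interval_mass_vanishes
    (ζ : ℝ → FiniteMeasure ℝ≥0)
    (hrc : ∀ t : ℝ, 0 ≤ t → ContinuousWithinAt ζ (Set.Ici t) t)
    (hmono : ∀ f : ℝ≥0 →ᵇ ℝ≥0, MonotoneOn (fun t => (ζ t).testAgainstNN f) (Set.Ici 0))
    (t : ℝ) (ht : 0 ≤ t) (x : ℝ≥0) :
    (∀ xn : ℕ → ℝ≥0, Antitone xn → Filter.Tendsto xn Filter.atTop (nhds x) →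
      Filter.Tendsto
        (fun n => sSup ((fun s => (ζ s (Set.Ioc x (xn n)) : ℝ)) '' Set.Icc 0 t))
        Filter.atTop (nhds 0)) ∧
    (∀ yn : ℕ → ℝ≥0, Monotone yn → Filter.Tendsto yn Filter.atTop (nhds x) →
      Filter.Tendsto
        (fun n => sSup ((fun s => (ζ s (Set.Ioo (yn n) x) : ℝ)) '' Set.Icc 0 t))
        Filter.atTop (nhds 0)) :=
  thin_interval_mass_vanishes_general ζ hmono t x

end
end

section
/- Let (α,μ) ∈ D_M^↑ × D_ℝ^↑. A triple (ξ,β,ι) ∈ D_M × D_M^↑ × D_ℝ^↑ solves the MVSP for (α,μ) if and only if both of the following hold: (a) for every x ∈ [0,∞), the pair of functions (t ↦ ξ_t[0,x], t ↦ β_t((x,∞)) + ι(t)) equals Γ[t ↦ α_t[0,x] − μ(t)]; and (b) β_t({0}) = α_t({0}) − ξ_t({0}) for all t ≥ 0. -/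
open MeasureTheory Filter Set
open scoped NNReal ENNReal BoundedContinuousFunction Topology

noncomputable section

/-!
Fix `x ≥ 0` and put `ψ = α[0,x] − μ`, `φ = ξ[0,x]`, `η = β(x,∞) + ι`. Since `dη = dβ(x,∞) + dι`,
conditions (1)–(3) of the MVSP at level `x` say that `(φ, η)` solves the Skorokhod problem on the
half-line for `ψ`: `φ = ψ + η ≥ 0` and `dη` does not charge `{φ ≠ 0}`. Its unique solution is
`Γ[ψ]`, whose second component is the running maximum `R` of `(−ψ) ∨ 0`. Indeed `η ≥ R` always,
and `φ > 0` on `{η > R}`, a set of positive `dη`-measure unless `η = R`. Conversely, wherever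
`ψ + R > 0`, `R` has no jump and, by right-continuity of `ψ`, is constant on a right neighbourhood;
such points form a `dR`-null set. Finally, given (1) at `x = 0`, condition (4) is equivalent to
(b) because `β[0,∞) = β{0} + β(0,∞)`.
-/

open Function

lemma lsExt_of_nonneg (g : ℝ → ℝ) {t : ℝ} (ht : 0 ≤ t) : lsExt g t = g t := if_neg ht.not_gt

lemma lsExt_of_neg (g : ℝ → ℝ) {t : ℝ} (ht : t < 0) : lsExt g t = 0 := if_pos ht

/-- The `g` for which `lsMeasure g` is the Lebesgue–Stieltjes measure `m^g` (otherwise it is the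
junk value `0`). -/
def IsStieltjesOnIci (g : ℝ → ℝ) : Prop :=
  (∀ t, 0 ≤ t → 0 ≤ g t) ∧ MonotoneOn g (Ici 0) ∧
    ∀ t, 0 ≤ t → ContinuousWithinAt g (Ici t) t

namespace IsStieltjesOnIci

variable {g h : ℝ → ℝ}

lemma lsExt_nonneg (hg : IsStieltjesOnIci g) (t : ℝ) : 0 ≤ lsExt g t := by
  rcases lt_or_ge t 0 with ht | ht
  · rw [lsExt_of_neg g ht]
  · rw [lsExt_of_nonneg g ht]; exact hg.1 t ht

lemma monotone_lsExt (hg : IsStieltjesOnIci g) : Monotone (lsExt g) := by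
  intro a b hab
  rcases lt_or_ge b 0 with hb | hb
  · rw [lsExt_of_neg g (hab.trans_lt hb), lsExt_of_neg g hb]
  rcases lt_or_ge a 0 with ha | ha
  · rw [lsExt_of_neg g ha]; exact hg.lsExt_nonneg b
  · rw [lsExt_of_nonneg g ha, lsExt_of_nonneg g hb]; exact hg.2.1 ha hb hab

lemma continuousWithinAt_lsExt (hg : IsStieltjesOnIci g) (t : ℝ) :
    ContinuousWithinAt (lsExt g) (Ici t) t := by
  rcases lt_or_ge t 0 with ht | ht
  · refine continuousAt_const.continuousWithinAt.congr_of_eventuallyEq ?_ (lsExt_of_neg g ht)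
    filter_upwards [nhdsWithin_le_nhds (eventually_lt_nhds ht)] with s hs
    exact lsExt_of_neg g hs
  · exact (hg.2.2 t ht).congr (fun s hs => lsExt_of_nonneg g (ht.trans hs)) (lsExt_of_nonneg g ht)

def toStieltjesFunction (hg : IsStieltjesOnIci g) : StieltjesFunction ℝ :=
  ⟨lsExt g, hg.monotone_lsExt, hg.continuousWithinAt_lsExt⟩

lemma toStieltjesFunction_apply (hg : IsStieltjesOnIci g) (t : ℝ) :
    hg.toStieltjesFunction t = lsExt g t := rfl

lemma lsMeasure_eq (hg : IsStieltjesOnIci g) : lsMeasure g = hg.toStieltjesFunction.measure :=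
  dif_pos ⟨hg.monotone_lsExt, hg.continuousWithinAt_lsExt⟩

lemma tendsto_atBot (hg : IsStieltjesOnIci g) : Tendsto hg.toStieltjesFunction atBot (𝓝 0) :=
  tendsto_const_nhds.congr' <| (eventually_lt_atBot 0).mono fun _ hs => (lsExt_of_neg g hs).symm

lemma lsMeasure_Iic (hg : IsStieltjesOnIci g) {t : ℝ} (ht : 0 ≤ t) :
    lsMeasure g (Iic t) = ENNReal.ofReal (g t) := by
  rw [hg.lsMeasure_eq, hg.toStieltjesFunction.measure_Iic hg.tendsto_atBot,
    toStieltjesFunction_apply, lsExt_of_nonneg g ht, sub_zero]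

lemma lsMeasure_Iio_zero (hg : IsStieltjesOnIci g) : lsMeasure g (Iio 0) = 0 := by
  have hlim : leftLim hg.toStieltjesFunction 0 = 0 :=
    leftLim_eq_of_tendsto <| tendsto_const_nhds.congr' <|
      eventually_nhdsWithin_of_forall fun _ hs => (lsExt_of_neg g hs).symm
  rw [hg.lsMeasure_eq, hg.toStieltjesFunction.measure_Iio hg.tendsto_atBot, hlim, sub_zero,
    ENNReal.ofReal_zero]

lemma add (hg : IsStieltjesOnIci g) (hh : IsStieltjesOnIci h) :
    IsStieltjesOnIci (fun t => g t + h t) :=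
  ⟨fun t ht => add_nonneg (hg.1 t ht) (hh.1 t ht), hg.2.1.add hh.2.1,
    fun t ht => (hg.2.2 t ht).add (hh.2.2 t ht)⟩

lemma lsMeasure_add (hg : IsStieltjesOnIci g) (hh : IsStieltjesOnIci h) :
    lsMeasure (fun t => g t + h t) = lsMeasure g + lsMeasure h := by
  have hsum : (hg.add hh).toStieltjesFunction =
      hg.toStieltjesFunction + hh.toStieltjesFunction := by
    ext t
    by_cases ht : t < 0 <;> simp [toStieltjesFunction_apply, lsExt, ht]
  rw [hg.lsMeasure_eq, hh.lsMeasure_eq, (hg.add hh).lsMeasure_eq, hsum,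
    StieltjesFunction.measure_add]

end IsStieltjesOnIci

lemma DRup.isStieltjesOnIci {f : ℝ → ℝ} (hf : DRup f) : IsStieltjesOnIci f :=
  ⟨hf.2.1, hf.2.2, hf.1.1⟩

lemma MeasureTheory.FiniteMeasure.apply_add_apply_compl {Ω : Type*} [MeasurableSpace Ω]
    (ν : FiniteMeasure Ω) {B : Set Ω} (hB : MeasurableSet B) : (ν B : ℝ) + ν Bᶜ = ν univ :=
  measureReal_add_measureReal_compl (μ := (ν : Measure Ω)) hB

namespace DMup

variable {ζ : ℝ → FiniteMeasure ℝ≥0}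

lemma toMeasure_mono (hζ : DMup ζ) {s t : ℝ} (hs : 0 ≤ s) (hst : s ≤ t) :
    (ζ s : Measure ℝ≥0) ≤ ζ t := by
  have hclosed : ∀ F, IsClosed F → (ζ s : Measure ℝ≥0) F ≤ (ζ t : Measure ℝ≥0) F := by
    intro F hF
    refine le_of_tendsto_of_tendsto' (HasOuterApproxClosed.tendsto_lintegral_apprSeq hF (ζ s))
      (HasOuterApproxClosed.tendsto_lintegral_apprSeq hF (ζ t)) fun n => ?_
    rw [← FiniteMeasure.testAgainstNN_coe_eq, ← FiniteMeasure.testAgainstNN_coe_eq]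
    exact_mod_cast hζ.2 (hF.apprSeq n) hs (hs.trans hst) hst
  refine Measure.le_iff.2 fun B hB => ?_
  rw [hB.measure_eq_iSup_isClosed_of_ne_top (measure_ne_top _ _),
    hB.measure_eq_iSup_isClosed_of_ne_top (measure_ne_top _ _)]
  exact iSup_mono fun F => iSup_mono fun _ => iSup_mono fun hF => hclosed F hF

lemma monotoneOn_apply (hζ : DMup ζ) (B : Set ℝ≥0) :
    MonotoneOn (fun s => (ζ s B : ℝ)) (Ici 0) := fun _ hs _ _ hst =>
  ENNReal.toReal_mono (measure_ne_top _ _) (hζ.toMeasure_mono hs hst B)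

lemma continuousWithinAt_apply (hζ : DMup ζ) {t : ℝ} (ht : 0 ≤ t) {B : Set ℝ≥0}
    (hB : MeasurableSet B) : ContinuousWithinAt (fun s => (ζ s B : ℝ)) (Ici t) t := by
  have hmass : Tendsto (fun s => (ζ s univ : ℝ)) (𝓝[≥] t) (𝓝 (ζ t univ)) :=
    (NNReal.continuous_coe.tendsto _).comp
      ((FiniteMeasure.continuous_mass.tendsto _).comp (hζ.1.1 t ht))
  -- the increments of `ζ · B` are dominated by those of the total mass
  have hup : ∀ s, t ≤ s → (ζ s B : ℝ) ≤ ζ t B + (ζ s univ - ζ t univ) := fun s hs => by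
    have := hζ.monotoneOn_apply Bᶜ ht (ht.trans hs) hs
    linarith [(ζ s).apply_add_apply_compl hB, (ζ t).apply_add_apply_compl hB]
  have hlim := (hmass.sub_const (ζ t univ : ℝ)).const_add (ζ t B : ℝ)
  rw [sub_self, add_zero] at hlim
  refine tendsto_of_tendsto_of_tendsto_of_le_of_le' tendsto_const_nhds hlim ?_ ?_
  · filter_upwards [self_mem_nhdsWithin] with s hs
    exact hζ.monotoneOn_apply B ht (ht.trans hs) hs
  · filter_upwards [self_mem_nhdsWithin] with s hs
    exact hup s hs

lemma isStieltjesOnIci_apply (hζ : DMup ζ) {B : Set ℝ≥0} (hB : MeasurableSet B) :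
    IsStieltjesOnIci (fun s => (ζ s B : ℝ)) :=
  ⟨fun _ _ => NNReal.coe_nonneg _, hζ.monotoneOn_apply B,
    fun _ ht => hζ.continuousWithinAt_apply ht hB⟩

end DMup

namespace StieltjesFunction

lemma measure_setOf_le_inter_Iic_le (f : StieltjesFunction ℝ) (hf : Tendsto f atBot (𝓝 0))
    (c t : ℝ) : f.measure ({u | f u ≤ c} ∩ Iic t) ≤ ENNReal.ofReal c := by
  set S := {u | f u ≤ c} ∩ Iic t
  rcases S.eq_empty_or_nonempty with hS | hS
  · simp [hS]
  have hbdd : BddAbove S := ⟨t, fun u hu => hu.2⟩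
  set τ := sSup S
  by_cases hτ : f τ ≤ c
  · calc f.measure S ≤ f.measure (Iic τ) := measure_mono fun u hu => le_csSup hbdd hu
      _ = ENNReal.ofReal (f τ) := by rw [f.measure_Iic hf, sub_zero]
      _ ≤ ENNReal.ofReal c := ENNReal.ofReal_le_ofReal hτ
  · have hsub : S ⊆ Iio τ := fun u hu =>
      (le_csSup hbdd hu).lt_of_ne (by rintro rfl; exact hτ hu.1)
    have hlim : leftLim f τ ≤ c := by
      refine le_of_tendsto (f.mono.tendsto_leftLim τ) (eventually_nhdsWithin_of_forall ?_)
      intro s hs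
      obtain ⟨u, hu, hsu⟩ := exists_lt_of_lt_csSup hS hs
      exact (f.mono hsu.le).trans hu.1
    calc f.measure S ≤ f.measure (Iio τ) := measure_mono hsub
      _ = ENNReal.ofReal (leftLim f τ) := by rw [f.measure_Iio hf, sub_zero]
      _ ≤ ENNReal.ofReal c := ENNReal.ofReal_le_ofReal hlim

/- Each `u ∈ N` has a null interval `[u, v u)`. The open parts `(u, v u)` have a countable
subcover, and the points of `N` outside all of them carry pairwise disjoint intervals. -/
lemma measure_eq_zero_of_leftLim_eq_of_exists_eq (f : StieltjesFunction ℝ) {N : Set ℝ}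
    (hN : ∀ u ∈ N, leftLim f u = f u ∧ ∃ v, u < v ∧ f v = f u) : f.measure N = 0 := by
  choose! v hv using fun u hu => (hN u hu).2
  have hIco : ∀ u ∈ N, f.measure (Ico u (v u)) = 0 := by
    intro u hu
    rw [f.measure_Ico, (hN u hu).1, ENNReal.ofReal_eq_zero, sub_nonpos, ← (hv u hu).2]
    exact f.mono.leftLim_le le_rfl
  obtain ⟨T, hTN, hTc, hT⟩ :=
    TopologicalSpace.isOpen_biUnion_countable N (fun u => Ioo u (v u)) fun _ _ => isOpen_Ioo
  set N' := N \ ⋃ u ∈ N, Ioo u (v u)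
  have hN'c : N'.Countable := by
    have hsep : ∀ a ∈ N', ∀ b ∈ N', a < b → v a ≤ b := fun a ha b hb hab => by
      by_contra! h
      exact hb.2 (mem_biUnion ha.1 ⟨hab, h⟩)
    refine PairwiseDisjoint.countable_of_Ioo (fun a ha b hb hab => ?_) fun u hu => (hv u hu.1).1
    rcases hab.lt_or_gt with h | h
    · exact Ioo_disjoint_Ioo.2
        ((min_le_left _ _).trans <| (hsep a ha b hb h).trans (le_max_right _ _))
    · exact Ioo_disjoint_Ioo.2
        ((min_le_right _ _).trans <| (hsep b hb a ha h).trans (le_max_left _ _))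
  have hcover : N ⊆ (⋃ u ∈ T, Ico u (v u)) ∪ ⋃ u ∈ N', Ico u (v u) := by
    intro u hu
    by_cases hU : u ∈ ⋃ w ∈ N, Ioo w (v w)
    · rw [← hT] at hU
      exact Or.inl (biUnion_mono subset_rfl (fun _ _ => Ioo_subset_Ico_self) hU)
    · exact Or.inr (mem_biUnion ⟨hu, hU⟩ ⟨le_rfl, (hv u hu).1⟩)
  refine measure_mono_null hcover (measure_union_null ?_ ?_)
  · exact (measure_biUnion_null_iff hTc).2 fun u hu => hIco u (hTN hu)
  · exact (measure_biUnion_null_iff hN'c).2 fun u hu => hIco u hu.1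

end StieltjesFunction

def runningMax (ψ : ℝ → ℝ) (t : ℝ) : ℝ := sSup ((fun s => max (-ψ s) 0) '' Icc 0 t)

lemma Gamma2_eq_runningMax (ψ : ℝ → ℝ) (t : ℝ) : Gamma2 ψ t = runningMax ψ t := by
  have himg : -((fun s => min (ψ s) 0) '' Icc 0 t) = (fun s => max (-ψ s) 0) '' Icc 0 t := by
    rw [← image_neg_eq_neg, image_image]
    simp only [← max_neg_neg, neg_zero]
  rw [Gamma2, Gamma1, Real.sInf_def, himg, runningMax]
  ring

lemma Gamma1_eq_add_runningMax (ψ : ℝ → ℝ) (t : ℝ) :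
    Gamma1 ψ t = ψ t + runningMax ψ t := by
  rw [← Gamma2_eq_runningMax, Gamma2]
  ring

section Skorokhod

variable {ψ φ η : ℝ → ℝ} {s t c : ℝ}

lemma le_runningMax (hbdd : BddAbove ((fun s => max (-ψ s) 0) '' Icc 0 t)) (hs : s ∈ Icc 0 t) :
    max (-ψ s) 0 ≤ runningMax ψ t :=
  le_csSup hbdd (mem_image_of_mem _ hs)

lemma runningMax_le (ht : 0 ≤ t) (h : ∀ s ∈ Icc 0 t, max (-ψ s) 0 ≤ c) :
    runningMax ψ t ≤ c :=
  csSup_le ((nonempty_Icc.2 ht).image _) (forall_mem_image.2 h)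

theorem eq_runningMax_of_ae_eq_zero (hη : IsStieltjesOnIci η)
    (hφη : ∀ u, 0 ≤ u → φ u = ψ u + η u) (hφ : ∀ u, 0 ≤ u → 0 ≤ φ u)
    (hae : ∀ᵐ u ∂lsMeasure η, φ u = 0) (ht : 0 ≤ t) : η t = runningMax ψ t := by
  have hbound : ∀ s ∈ Icc 0 t, max (-ψ s) 0 ≤ η t := fun s hs =>
    max_le (by linarith [hφη s hs.1, hφ s hs.1, hη.2.1 hs.1 ht hs.2]) (hη.1 t ht)
  refine le_antisymm ?_ (runningMax_le ht hbound)
  set c := runningMax ψ t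
  have hc : ∀ s ∈ Icc 0 t, max (-ψ s) 0 ≤ c := fun s hs =>
    le_runningMax ⟨η t, forall_mem_image.2 hbound⟩ hs
  have hc0 : 0 ≤ c := (le_max_right _ _).trans (hc 0 ⟨le_rfl, ht⟩)
  set f := hη.toStieltjesFunction
  -- `φ ≥ ψ + η > ψ + c ≥ 0` where `η > c`, so that set is `dη`-null, yet it has mass `≥ η t - c`
  have hcover : Iic t ⊆ {u | ¬φ u = 0} ∪ ({u | f u ≤ c} ∩ Iic t) := by
    intro u hu
    rcases lt_or_ge u 0 with hu0 | hu0
    · exact Or.inr ⟨show lsExt η u ≤ c by rw [lsExt_of_neg η hu0]; exact hc0, hu⟩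
    by_cases hηu : η u ≤ c
    · exact Or.inr ⟨show lsExt η u ≤ c by rwa [lsExt_of_nonneg η hu0], hu⟩
    · refine Or.inl (ne_of_gt ?_)
      rw [hφη u hu0]
      linarith [le_max_left (-ψ u) 0, hc u ⟨hu0, hu⟩]
  have hle : ENNReal.ofReal (η t) ≤ ENNReal.ofReal c := calc
    ENNReal.ofReal (η t) = lsMeasure η (Iic t) := (hη.lsMeasure_Iic ht).symm
    _ ≤ lsMeasure η {u | ¬φ u = 0} + lsMeasure η ({u | f u ≤ c} ∩ Iic t) :=
      (measure_mono hcover).trans (measure_union_le _ _)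
    _ ≤ 0 + ENNReal.ofReal c := add_le_add (ae_iff.1 hae).le <| by
      rw [hη.lsMeasure_eq]
      exact f.measure_setOf_le_inter_Iic_le hη.tendsto_atBot c t
    _ = ENNReal.ofReal c := zero_add _
  exact (ENNReal.ofReal_le_ofReal_iff hc0).1 hle

lemma leftLim_lsExt_eq_of_eq_runningMax (hη : IsStieltjesOnIci η)
    (hbdd : ∀ t, 0 ≤ t → BddAbove ((fun s => max (-ψ s) 0) '' Icc 0 t))
    (hηR : ∀ t, 0 ≤ t → η t = runningMax ψ t) {u : ℝ} (hu : 0 ≤ u) (hpos : 0 < ψ u + η u) :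
    leftLim (lsExt η) u = η u := by
  have hmono := hη.monotone_lsExt
  set L := leftLim (lsExt η) u
  have hL0 : 0 ≤ L := (hη.lsExt_nonneg (u - 1)).trans (hmono.le_leftLim (by linarith))
  have hs : ∀ s ∈ Icc 0 u, max (-ψ s) 0 ≤ max L (-ψ u) := by
    intro s hs
    rcases hs.2.lt_or_eq with hsu | rfl
    · calc max (-ψ s) 0 ≤ η s :=
          (le_runningMax (hbdd s hs.1) ⟨hs.1, le_rfl⟩).trans_eq (hηR s hs.1).symm
        _ = lsExt η s := (lsExt_of_nonneg η hs.1).symm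
        _ ≤ L := hmono.le_leftLim hsu
        _ ≤ max L (-ψ u) := le_max_left _ _
    · rw [max_comm L]
      exact max_le_max le_rfl hL0
  have key : η u ≤ max L (-ψ u) := (hηR u hu).trans_le (runningMax_le hu hs)
  refine le_antisymm ((hmono.leftLim_le le_rfl).trans (lsExt_of_nonneg η hu).le) ?_
  rcases le_max_iff.1 key with h | h
  · exact h
  · linarith

lemma exists_gt_eq_of_eq_runningMax (hη : IsStieltjesOnIci η)
    (hbdd : ∀ t, 0 ≤ t → BddAbove ((fun s => max (-ψ s) 0) '' Icc 0 t))
    (hηR : ∀ t, 0 ≤ t → η t = runningMax ψ t) {u : ℝ} (hu : 0 ≤ u) (hpos : 0 < ψ u + η u)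
    (hψ : ContinuousWithinAt ψ (Ici u) u) : ∃ v, u < v ∧ η v = η u := by
  set ε := (ψ u + η u) / 2
  have hε : 0 < ε := half_pos hpos
  have hcont : ContinuousWithinAt (fun s => ψ s + η s) (Ici u) u := hψ.add (hη.2.2 u hu)
  obtain ⟨v, huv, hsub⟩ :=
    mem_nhdsGE_iff_exists_Icc_subset.1 (hcont.eventually (lt_mem_nhds (half_lt_self hpos)))
  have hv : 0 ≤ v := hu.trans huv.le
  refine ⟨v, huv, le_antisymm ?_ (hη.2.1 hu hv huv.le)⟩
  have hs : ∀ s ∈ Icc 0 v, max (-ψ s) 0 ≤ max (η u) (η v - ε) := by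
    intro s hs
    rcases le_or_gt s u with hsu | hsu
    · exact ((le_runningMax (hbdd u hu) ⟨hs.1, hsu⟩).trans_eq (hηR u hu).symm).trans
        (le_max_left _ _)
    · have h1 : ε < ψ s + η s := hsub ⟨hsu.le, hs.2⟩
      have h2 : η s ≤ η v := hη.2.1 (hu.trans hsu.le) hv hs.2
      exact max_le (by linarith [le_max_right (η u) (η v - ε)])
        ((hη.1 u hu).trans (le_max_left _ _))
  have key : η v ≤ max (η u) (η v - ε) := (hηR v hv).trans_le (runningMax_le hv hs)
  rcases le_max_iff.1 key with h | h
  · exact h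
  · linarith

theorem ae_eq_zero_of_eq_runningMax (hη : IsStieltjesOnIci η)
    (hψ : ∀ t, 0 ≤ t → ContinuousWithinAt ψ (Ici t) t)
    (hbdd : ∀ t, 0 ≤ t → BddAbove ((fun s => max (-ψ s) 0) '' Icc 0 t))
    (hφη : ∀ u, 0 ≤ u → φ u = ψ u + η u) (hηR : ∀ t, 0 ≤ t → η t = runningMax ψ t) :
    ∀ᵐ u ∂lsMeasure η, φ u = 0 := by
  have hsub : {u | ¬φ u = 0} ⊆ Iio 0 ∪ {u | 0 ≤ u ∧ 0 < ψ u + η u} := by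
    intro u hu
    rcases lt_or_ge u 0 with h | h
    · exact Or.inl h
    refine Or.inr ⟨h, (?_ : 0 ≤ ψ u + η u).lt_of_ne ?_⟩
    · rw [hηR u h]
      linarith [le_max_left (-ψ u) 0, le_runningMax (hbdd u h) ⟨h, le_rfl⟩]
    · rw [← hφη u h]
      exact Ne.symm hu
  refine ae_iff.2 (measure_mono_null hsub (measure_union_null hη.lsMeasure_Iio_zero ?_))
  rw [hη.lsMeasure_eq]
  refine hη.toStieltjesFunction.measure_eq_zero_of_leftLim_eq_of_exists_eq
    fun u ⟨hu, hpos⟩ => ?_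
  simp only [IsStieltjesOnIci.toStieltjesFunction_apply, lsExt_of_nonneg η hu]
  refine ⟨leftLim_lsExt_eq_of_eq_runningMax hη hbdd hηR hu hpos, ?_⟩
  obtain ⟨v, huv, hv⟩ := exists_gt_eq_of_eq_runningMax hη hbdd hηR hu hpos (hψ u hu)
  exact ⟨v, huv, by rw [lsExt_of_nonneg η (hu.trans huv.le), hv]⟩

end Skorokhod

/-- The Skorokhod problem on the half-line; `φ ≥ 0` and the regularity of `η` are imposed
separately. -/
def SolvesSkorokhodProblem (ψ φ η : ℝ → ℝ) : Prop :=
  (∀ t, 0 ≤ t → φ t = ψ t + η t) ∧ ∀ᵐ t ∂lsMeasure η, φ t = 0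

theorem solvesSkorokhodProblem_iff {ψ φ η : ℝ → ℝ} (hη : IsStieltjesOnIci η)
    (hψ : ∀ t, 0 ≤ t → ContinuousWithinAt ψ (Ici t) t)
    (hbdd : ∀ t, 0 ≤ t → BddAbove ((fun s => max (-ψ s) 0) '' Icc 0 t))
    (hφ : ∀ t, 0 ≤ t → 0 ≤ φ t) :
    SolvesSkorokhodProblem ψ φ η ↔ ∀ t, 0 ≤ t → φ t = Gamma1 ψ t ∧ η t = Gamma2 ψ t := by
  simp only [Gamma1_eq_add_runningMax, Gamma2_eq_runningMax]
  constructor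
  · rintro ⟨hφη, hae⟩ t ht
    have hηR := eq_runningMax_of_ae_eq_zero hη hφη hφ hae ht
    exact ⟨by rw [hφη t ht, hηR], hηR⟩
  · intro h
    have hφη : ∀ t, 0 ≤ t → φ t = ψ t + η t := fun t ht => by rw [(h t ht).1, (h t ht).2]
    exact ⟨hφη, ae_eq_zero_of_eq_runningMax hη hψ hbdd hφη fun t ht => (h t ht).2⟩

section MVSP

variable {α ξ β : ℝ → FiniteMeasure ℝ≥0} {μ ι : ℝ → ℝ}

theorem solvesMVSP_iff (hβ : DMup β) (hι : DRup ι) :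
    SolvesMVSP α μ ξ β ι ↔
      (∀ x : ℝ≥0, SolvesSkorokhodProblem (fun s => (α s (Iic x) : ℝ) - μ s)
        (fun s => (ξ s (Iic x) : ℝ)) (fun s => (β s (Ioi x) : ℝ) + ι s)) ∧
      ∀ t, 0 ≤ t → (β t univ : ℝ) + ι t = μ t := by
  have hadd := fun x : ℝ≥0 =>
    (hβ.isStieltjesOnIci_apply (measurableSet_Ioi (a := x))).lsMeasure_add hι.isStieltjesOnIci
  simp only [SolvesMVSP, SolvesSkorokhodProblem, hadd, ae_add_measure_iff, forall_and,
    ← add_assoc, and_assoc]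

theorem solvesSkorokhodProblem_Iic_Ioi_iff (hα : DMup α) (hμ : DRup μ) (hβ : DMup β)
    (hι : DRup ι) (x : ℝ≥0) :
    SolvesSkorokhodProblem (fun s => (α s (Iic x) : ℝ) - μ s)
      (fun s => (ξ s (Iic x) : ℝ)) (fun s => (β s (Ioi x) : ℝ) + ι s) ↔
      ∀ t : ℝ, 0 ≤ t → (ξ t (Iic x) : ℝ) = Gamma1 (fun s => (α s (Iic x) : ℝ) - μ s) t ∧
        (β t (Ioi x) : ℝ) + ι t = Gamma2 (fun s => (α s (Iic x) : ℝ) - μ s) t :=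
  solvesSkorokhodProblem_iff
    ((hβ.isStieltjesOnIci_apply measurableSet_Ioi).add hι.isStieltjesOnIci)
    (fun t ht => (hα.continuousWithinAt_apply ht measurableSet_Iic).sub (hμ.1.1 t ht))
    (fun t ht => ⟨max (μ t) 0, forall_mem_image.2 fun s hs => max_le_max
      (by linarith [hμ.2.2 hs.1 ht hs.2, (α s (Iic x)).coe_nonneg]) le_rfl⟩)
    fun _ _ => NNReal.coe_nonneg _

end MVSP

theorem mvsp_iff_skorokhod_general
    (α ξ β : ℝ → FiniteMeasure ℝ≥0) (μ ι : ℝ → ℝ)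
    (hα : DMup α) (hμ : DRup μ) (hβ : DMup β) (hι : DRup ι) :
    SolvesMVSP α μ ξ β ι ↔
      ((∀ x : ℝ≥0, ∀ t : ℝ, 0 ≤ t →
          (ξ t (Set.Iic x) : ℝ) = Gamma1 (fun s => (α s (Set.Iic x) : ℝ) - μ s) t ∧
          (β t (Set.Ioi x) : ℝ) + ι t = Gamma2 (fun s => (α s (Set.Iic x) : ℝ) - μ s) t) ∧
       (∀ t : ℝ, 0 ≤ t →
          (β t ({0} : Set ℝ≥0) : ℝ) = (α t ({0} : Set ℝ≥0) : ℝ) - (ξ t ({0} : Set ℝ≥0) : ℝ))) := by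
  have hIic : Iic (0 : ℝ≥0) = {0} := Iic_bot
  have hsplit : ∀ t, (β t {0} : ℝ) + β t (Ioi 0) = β t univ := fun t => by
    rw [← hIic, ← compl_Iic]
    exact (β t).apply_add_apply_compl measurableSet_Iic
  rw [solvesMVSP_iff hβ hι, forall_congr' (solvesSkorokhodProblem_Iic_Ioi_iff hα hμ hβ hι)]
  refine and_congr_right fun hΓ => forall₂_congr fun t ht => ?_
  -- condition (1) at `x = 0`
  have h0 := (hΓ 0 t ht).2
  rw [Gamma2, ← (hΓ 0 t ht).1] at h0
  simp only [hIic] at h0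
  constructor <;> intro <;> linarith [hsplit t]

/-- Characterization of the MVSP in terms of the Skorokhod map on the
half-line: `(ξ,β,ι)` solves the MVSP for `(α,μ)` iff
`(ξ[0,x], β((x,∞)) + ι) = Γ[α[0,x] − μ]` for every `x ≥ 0` and
`β({0}) = α({0}) − ξ({0})`. -/
theorem mvsp_iff_skorokhod
    (α ξ β : ℝ → FiniteMeasure ℝ≥0) (μ ι : ℝ → ℝ)
    (hα : DMup α) (hμ : DRup μ) (hξ : DM ξ) (hβ : DMup β) (hι : DRup ι) :
    SolvesMVSP α μ ξ β ι ↔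
      ((∀ x : ℝ≥0, ∀ t : ℝ, 0 ≤ t →
          (ξ t (Set.Iic x) : ℝ) = Gamma1 (fun s => (α s (Set.Iic x) : ℝ) - μ s) t ∧
          (β t (Set.Ioi x) : ℝ) + ι t = Gamma2 (fun s => (α s (Set.Iic x) : ℝ) - μ s) t) ∧
       (∀ t : ℝ, 0 ≤ t →
          (β t ({0} : Set ℝ≥0) : ℝ) = (α t ({0} : Set ℝ≥0) : ℝ) - (ξ t ({0} : Set ℝ≥0) : ℝ))) :=
  mvsp_iff_skorokhod_general α ξ β μ ι hα hμ hβ hι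

end
end

section
/- Let (α,μ) ∈ D_M^↑ × D_ℝ^↑ and let (ξ,β,ι) be the unique solution of the MVSP for (α,μ). If α_t is an atomless measure for every t ≥ 0, then ξ_t and β_t are atomless measures for every t ≥ 0. -/
open MeasureTheory Filter Set
open scoped NNReal ENNReal BoundedContinuousFunction Topology

noncomputable section

/-- If `α_t` is atomless for every `t ≥ 0`, then so are the components `ξ_t`
and `β_t` of the solution of the MVSP. -/
theorem mvsp_atomless
    (α ξ β : ℝ → FiniteMeasure ℝ≥0) (μ ι : ℝ → ℝ)
    (hα : DMup α) (hμ : DRup μ) (hξ : DM ξ) (hβ : DMup β) (hι : DRup ι)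
    (hsol : SolvesMVSP α μ ξ β ι)
    (hatomless : ∀ t : ℝ, 0 ≤ t → ∀ x : ℝ≥0, α t ({x} : Set ℝ≥0) = 0) :
    ∀ t : ℝ, 0 ≤ t → ∀ x : ℝ≥0,
      ξ t ({x} : Set ℝ≥0) = 0 ∧ β t ({x} : Set ℝ≥0) = 0 := by
  intro t ht x
  have h4 := hsol.2.2.2 t ht
  -- key: (ξ t) + (β t) = (α t) as measures
  have key : ∀ y : ℝ≥0, (ξ t).toMeasure (Set.Iic y) + (β t).toMeasure (Set.Iic y)
      = (α t).toMeasure (Set.Iic y) := by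
    intro y
    have hβsplit : (β t).toMeasure (Set.Iic y) + (β t).toMeasure (Set.Ioi y)
        = (β t).toMeasure Set.univ := by
      rw [← measure_union (Set.Iic_disjoint_Ioi le_rfl) measurableSet_Ioi,
        Set.Iic_union_Ioi]
    have hβsplitR : ((β t) (Set.Iic y) : ℝ) + ((β t) (Set.Ioi y) : ℝ)
        = ((β t) Set.univ : ℝ) := by
      have : ((β t) (Set.Iic y)) + ((β t) (Set.Ioi y)) = ((β t) Set.univ) := by
        have := hβsplit
        simp only [← FiniteMeasure.ennreal_coeFn_eq_coeFn_toMeasure] at this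
        exact_mod_cast this
      exact_mod_cast this
    have hr : ((ξ t) (Set.Iic y) : ℝ) + ((β t) (Set.Iic y) : ℝ)
        = ((α t) (Set.Iic y) : ℝ) := by
      have h1 := hsol.1 y t ht
      linarith
    have hnn : ((ξ t) (Set.Iic y)) + ((β t) (Set.Iic y)) = ((α t) (Set.Iic y)) := by
      exact_mod_cast hr
    have : (((ξ t) (Set.Iic y) : ℝ≥0∞)) + (((β t) (Set.Iic y) : ℝ≥0∞))
        = (((α t) (Set.Iic y) : ℝ≥0∞)) := by exact_mod_cast hnn
    simpa only [FiniteMeasure.ennreal_coeFn_eq_coeFn_toMeasure] using this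
  have heq : (ξ t).toMeasure + (β t).toMeasure = (α t).toMeasure := by
    refine MeasureTheory.Measure.ext_of_Iic _ _ (fun y => ?_)
    simpa [Measure.add_apply] using key y
  have hαx : (α t).toMeasure ({x} : Set ℝ≥0) = 0 := by
    have := hatomless t ht x
    rw [← FiniteMeasure.ennreal_coeFn_eq_coeFn_toMeasure, this]
    simp
  have hsum : (ξ t).toMeasure ({x} : Set ℝ≥0) + (β t).toMeasure ({x} : Set ℝ≥0) = 0 := by
    rw [← Measure.add_apply, heq, hαx]
  rw [add_eq_zero] at hsum
  constructor
  · have : ((ξ t) ({x} : Set ℝ≥0) : ℝ≥0∞) = 0 := by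
      rw [FiniteMeasure.ennreal_coeFn_eq_coeFn_toMeasure]; exact hsum.1
    exact_mod_cast this
  · have : ((β t) ({x} : Set ℝ≥0) : ℝ≥0∞) = 0 := by
      rw [FiniteMeasure.ennreal_coeFn_eq_coeFn_toMeasure]; exact hsum.2
    exact_mod_cast this

end
end

section
/- Let (α,μ) ∈ D_M^↑ × D_ℝ^↑ and let (ξ,β,ι) be the unique solution of the MVSP for (α,μ). If t ↦ α_t is continuous in the weak topology on M and μ is continuous, then t ↦ ξ_t and t ↦ β_t are continuous in the weak topology on M and ι is continuous. -/
open MeasureTheory Filter Set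
open scoped NNReal ENNReal BoundedContinuousFunction Topology

noncomputable section

section AuxLemmas

/-- The "complement" of a nonnegative bounded continuous function `f`:
`x ↦ nndist f 0 - f x`. -/
def complBCF (f : ℝ≥0 →ᵇ ℝ≥0) : ℝ≥0 →ᵇ ℝ≥0 :=
  BoundedContinuousFunction.mkOfBound
    ⟨fun x => nndist f 0 - f x, continuous_const.sub f.continuous⟩
    (nndist f 0)
    (by
      intro x y
      simp only [ContinuousMap.coe_mk]
      rw [NNReal.dist_eq]
      have hx : ((nndist f 0 - f x : ℝ≥0) : ℝ) ≤ (nndist f 0 : ℝ) := by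
        exact_mod_cast tsub_le_self
      have hy : ((nndist f 0 - f y : ℝ≥0) : ℝ) ≤ (nndist f 0 : ℝ) := by
        exact_mod_cast tsub_le_self
      have hx0 : (0:ℝ) ≤ ((nndist f 0 - f x : ℝ≥0) : ℝ) := (nndist f 0 - f x).coe_nonneg
      have hy0 : (0:ℝ) ≤ ((nndist f 0 - f y : ℝ≥0) : ℝ) := (nndist f 0 - f y).coe_nonneg
      rw [abs_sub_le_iff]
      constructor <;> linarith)

lemma complBCF_add (f : ℝ≥0 →ᵇ ℝ≥0) :
    f + complBCF f = BoundedContinuousFunction.const ℝ≥0 (nndist f 0) := by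
  ext x
  have hc : complBCF f x = nndist f 0 - f x := rfl
  simp only [BoundedContinuousFunction.add_apply, BoundedContinuousFunction.const_apply, hc]
  exact_mod_cast add_tsub_cancel_of_le (BoundedContinuousFunction.NNReal.upper_bound f x)

lemma testAgainstNN_measure_add (m1 m2 : FiniteMeasure ℝ≥0) (f : ℝ≥0 →ᵇ ℝ≥0) :
    (m1 + m2).testAgainstNN f = m1.testAgainstNN f + m2.testAgainstNN f := by
  apply ENNReal.coe_injective
  rw [ENNReal.coe_add, FiniteMeasure.testAgainstNN_coe_eq, FiniteMeasure.testAgainstNN_coe_eq,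
    FiniteMeasure.testAgainstNN_coe_eq, FiniteMeasure.toMeasure_add, lintegral_add_measure]

lemma fm_split (ν : FiniteMeasure ℝ≥0) (x : ℝ≥0) :
    (ν (Set.Iic x) : ℝ) + (ν (Set.Ioi x) : ℝ) = (ν Set.univ : ℝ) := by
  have h2 : ν (Set.Iic x) + ν (Set.Ioi x) = ν Set.univ := by
    apply ENNReal.coe_injective
    rw [ENNReal.coe_add, FiniteMeasure.ennreal_coeFn_eq_coeFn_toMeasure,
      FiniteMeasure.ennreal_coeFn_eq_coeFn_toMeasure,
      FiniteMeasure.ennreal_coeFn_eq_coeFn_toMeasure,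
      ← measure_union (Set.Iic_disjoint_Ioi le_rfl) measurableSet_Ioi, Set.Iic_union_Ioi]
  exact_mod_cast congrArg (fun r : ℝ≥0 => (r : ℝ)) h2

lemma nhdsWithin_Ici_zero_split (t : ℝ) (ht : 0 ≤ t) :
    𝓝[Set.Ici (0:ℝ)] t = 𝓝[Set.Ico 0 t] t ⊔ 𝓝[Set.Ici t] t := by
  rw [← nhdsWithin_union]
  congr 1
  ext s
  simp only [Set.mem_Ici, Set.mem_union, Set.mem_Ico]
  constructor
  · intro hs
    rcases lt_or_ge s t with h | h
    · exact Or.inl ⟨hs, h⟩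
    · exact Or.inr h
  · rintro (⟨h0, _⟩ | h)
    · exact h0
    · exact le_trans ht h

end AuxLemmas

/-- If the data `(α,μ)` of the MVSP is continuous (in the weak topology for
`α`), then so is the solution `(ξ,β,ι)`. -/
theorem mvsp_continuous
    (α ξ β : ℝ → FiniteMeasure ℝ≥0) (μ ι : ℝ → ℝ)
    (hα : DMup α) (hμ : DRup μ) (hξ : DM ξ) (hβ : DMup β) (hι : DRup ι)
    (hsol : SolvesMVSP α μ ξ β ι)
    (hαcont : ContinuousOn α (Set.Ici 0)) (hμcont : ContinuousOn μ (Set.Ici 0)) :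
    ContinuousOn ξ (Set.Ici 0) ∧ ContinuousOn β (Set.Ici 0) ∧
      ContinuousOn ι (Set.Ici 0) := by
  obtain ⟨heq, -, -, hmass⟩ := hsol
  -- the measure identity ξ_t + β_t = α_t
  have hξβα : ∀ t : ℝ, 0 ≤ t → ξ t + β t = α t := by
    intro t ht
    apply FiniteMeasure.toMeasure_injective
    apply MeasureTheory.Measure.ext_of_Iic
    intro a
    have h1 := heq a t ht
    have h4 := hmass t ht
    have h5 := fm_split (β t) a
    have hR : (ξ t (Set.Iic a) : ℝ) + (β t (Set.Iic a) : ℝ) = (α t (Set.Iic a) : ℝ) := by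
      linarith
    have hN : ξ t (Set.Iic a) + β t (Set.Iic a) = α t (Set.Iic a) := by exact_mod_cast hR
    rw [FiniteMeasure.toMeasure_add, MeasureTheory.Measure.add_apply,
      ← FiniteMeasure.ennreal_coeFn_eq_coeFn_toMeasure, ← FiniteMeasure.ennreal_coeFn_eq_coeFn_toMeasure,
      ← FiniteMeasure.ennreal_coeFn_eq_coeFn_toMeasure, ← ENNReal.coe_add, hN]
  -- the key left-limit statement at every t > 0
  have key : ∀ t : ℝ, 0 < t →
      Tendsto ι (𝓝[Set.Ico 0 t] t) (𝓝 (ι t)) ∧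
      Tendsto β (𝓝[Set.Ico 0 t] t) (𝓝 (β t)) := by
    intro t ht
    have hFne : (𝓝[Set.Ico 0 t] t).NeBot := by
      apply mem_closure_iff_nhdsWithin_neBot.mp
      rw [closure_Ico (ne_of_lt ht)]
      exact Set.right_mem_Icc.mpr ht.le
    obtain ⟨l, hl⟩ := hβ.1.2 t ht
    obtain ⟨Lι, hLι⟩ := hι.1.2 t ht
    have hmemF : ∀ᶠ s in 𝓝[Set.Ico 0 t] t, s ∈ Set.Ico 0 t := eventually_mem_nhdsWithin
    have hmassl : Tendsto (fun s => ((β s).mass : ℝ)) (𝓝[Set.Ico 0 t] t) (𝓝 (l.mass : ℝ)) :=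
      (NNReal.continuous_coe.tendsto _).comp
        ((MeasureTheory.FiniteMeasure.continuous_mass.tendsto l).comp hl)
    have hμt : Tendsto μ (𝓝[Set.Ico 0 t] t) (𝓝 (μ t)) :=
      (hμcont t ht.le).mono_left (nhdsWithin_mono t (fun s hs => hs.1))
    have hmd : ∀ s : ℝ, ((β s).mass : ℝ) = (β s Set.univ : ℝ) := fun s => rfl
    have hLsum : Lι + (l.mass : ℝ) = μ t := by
      have h1 : Tendsto (fun s => ι s + ((β s).mass : ℝ)) (𝓝[Set.Ico 0 t] t)
          (𝓝 (Lι + (l.mass : ℝ))) := hLι.add hmassl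
      have h2 : Tendsto (fun s => ι s + ((β s).mass : ℝ)) (𝓝[Set.Ico 0 t] t) (𝓝 (μ t)) := by
        apply Filter.Tendsto.congr' _ hμt
        filter_upwards [hmemF] with s hs
        have := hmass s hs.1
        rw [hmd s]
        linarith
      exact tendsto_nhds_unique h1 h2
    have hLι_le : Lι ≤ ι t := by
      apply le_of_tendsto hLι
      filter_upwards [hmemF] with s hs
      exact hι.2.2 (Set.mem_Ici.mpr hs.1) (Set.mem_Ici.mpr ht.le) hs.2.le
    have hmono_tA : ∀ f : ℝ≥0 →ᵇ ℝ≥0, ∀ᶠ s in 𝓝[Set.Ico 0 t] t,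
        (β s).testAgainstNN f ≤ (β t).testAgainstNN f := by
      intro f
      filter_upwards [hmemF] with s hs
      exact hβ.2 f (Set.mem_Ici.mpr hs.1) (Set.mem_Ici.mpr ht.le) hs.2.le
    have hmass_le : (l.mass : ℝ) ≤ ((β t).mass : ℝ) := by
      apply le_of_tendsto hmassl
      filter_upwards [hmono_tA 1] with s hs
      have : (β s).mass ≤ (β t).mass := by
        simpa [MeasureTheory.FiniteMeasure.testAgainstNN_one] using hs
      exact_mod_cast this
    have hμeq : ι t + ((β t).mass : ℝ) = μ t := by
      have := hmass t ht.le
      rw [hmd t]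
      linarith
    have hι_eq : Lι = ι t := by linarith
    have hmeq : (l.mass : ℝ) = ((β t).mass : ℝ) := by linarith
    refine ⟨hι_eq ▸ hLι, ?_⟩
    rw [MeasureTheory.FiniteMeasure.tendsto_iff_forall_testAgainstNN_tendsto]
    intro f
    have hlf : Tendsto (fun s => (β s).testAgainstNN f) (𝓝[Set.Ico 0 t] t)
        (𝓝 (l.testAgainstNN f)) :=
      ((MeasureTheory.FiniteMeasure.continuous_testAgainstNN_eval f).tendsto l).comp hl
    suffices h : l.testAgainstNN f = (β t).testAgainstNN f by rw [← h]; exact hlf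
    have h1 : l.testAgainstNN f ≤ (β t).testAgainstNN f := le_of_tendsto hlf (hmono_tA f)
    have hlg : Tendsto (fun s => (β s).testAgainstNN (complBCF f)) (𝓝[Set.Ico 0 t] t)
        (𝓝 (l.testAgainstNN (complBCF f))) :=
      ((MeasureTheory.FiniteMeasure.continuous_testAgainstNN_eval (complBCF f)).tendsto l).comp hl
    have h2 : l.testAgainstNN (complBCF f) ≤ (β t).testAgainstNN (complBCF f) :=
      le_of_tendsto hlg (hmono_tA (complBCF f))
    have h3 : l.testAgainstNN f + l.testAgainstNN (complBCF f) = nndist f 0 * l.mass := by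
      rw [← MeasureTheory.FiniteMeasure.testAgainstNN_add, complBCF_add,
        MeasureTheory.FiniteMeasure.testAgainstNN_const]
    have h4 : (β t).testAgainstNN f + (β t).testAgainstNN (complBCF f)
        = nndist f 0 * (β t).mass := by
      rw [← MeasureTheory.FiniteMeasure.testAgainstNN_add, complBCF_add,
        MeasureTheory.FiniteMeasure.testAgainstNN_const]
    have h1' : (l.testAgainstNN f : ℝ) ≤ ((β t).testAgainstNN f : ℝ) := by exact_mod_cast h1
    have h2' : (l.testAgainstNN (complBCF f) : ℝ) ≤ ((β t).testAgainstNN (complBCF f) : ℝ) := by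
      exact_mod_cast h2
    have h3' : (l.testAgainstNN f : ℝ) + (l.testAgainstNN (complBCF f) : ℝ)
        = (nndist f 0 : ℝ) * (l.mass : ℝ) := by exact_mod_cast h3
    have h4' : ((β t).testAgainstNN f : ℝ) + ((β t).testAgainstNN (complBCF f) : ℝ)
        = (nndist f 0 : ℝ) * ((β t).mass : ℝ) := by exact_mod_cast h4
    have h5 : (nndist f 0 : ℝ) * (l.mass : ℝ) = (nndist f 0 : ℝ) * ((β t).mass : ℝ) := by
      rw [hmeq]
    have hfin : (l.testAgainstNN f : ℝ) = ((β t).testAgainstNN f : ℝ) := by linarith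
    exact NNReal.coe_injective hfin
  -- continuity of β
  have hβcont : ContinuousOn β (Set.Ici 0) := by
    intro t ht
    have ht' : (0:ℝ) ≤ t := ht
    show Tendsto β (𝓝[Set.Ici 0] t) (𝓝 (β t))
    rw [nhdsWithin_Ici_zero_split t ht', tendsto_sup]
    constructor
    · rcases eq_or_lt_of_le ht' with h | h
      · rw [← h, Set.Ico_self, nhdsWithin_empty]
        exact tendsto_bot
      · exact (key t h).2
    · exact hβ.1.1 t ht'
  -- continuity of ι
  have hιcont : ContinuousOn ι (Set.Ici 0) := by
    intro t ht
    have ht' : (0:ℝ) ≤ t := ht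
    show Tendsto ι (𝓝[Set.Ici 0] t) (𝓝 (ι t))
    rw [nhdsWithin_Ici_zero_split t ht', tendsto_sup]
    constructor
    · rcases eq_or_lt_of_le ht' with h | h
      · rw [← h, Set.Ico_self, nhdsWithin_empty]
        exact tendsto_bot
      · exact (key t h).1
    · exact hι.1.1 t ht'
  -- continuity of ξ
  have hξcont : ContinuousOn ξ (Set.Ici 0) := by
    intro t ht
    have ht' : (0:ℝ) ≤ t := ht
    show Tendsto ξ (𝓝[Set.Ici 0] t) (𝓝 (ξ t))
    rw [MeasureTheory.FiniteMeasure.tendsto_iff_forall_testAgainstNN_tendsto]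
    intro f
    rw [← NNReal.tendsto_coe]
    have hA : Tendsto (fun s => ((α s).testAgainstNN f : ℝ)) (𝓝[Set.Ici 0] t)
        (𝓝 ((α t).testAgainstNN f : ℝ)) :=
      (NNReal.continuous_coe.tendsto _).comp
        (((MeasureTheory.FiniteMeasure.continuous_testAgainstNN_eval f).tendsto _).comp (hαcont t ht))
    have hB : Tendsto (fun s => ((β s).testAgainstNN f : ℝ)) (𝓝[Set.Ici 0] t)
        (𝓝 ((β t).testAgainstNN f : ℝ)) :=
      (NNReal.continuous_coe.tendsto _).comp
        (((MeasureTheory.FiniteMeasure.continuous_testAgainstNN_eval f).tendsto _).comp (hβcont t ht))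
    have hdecomp : ∀ s : ℝ, 0 ≤ s →
        ((ξ s).testAgainstNN f : ℝ) = ((α s).testAgainstNN f : ℝ) - ((β s).testAgainstNN f : ℝ) := by
      intro s hs
      have h2 : (ξ s).testAgainstNN f + (β s).testAgainstNN f = (α s).testAgainstNN f := by
        rw [← testAgainstNN_measure_add, hξβα s hs]
      have h2' : ((ξ s).testAgainstNN f : ℝ) + ((β s).testAgainstNN f : ℝ)
          = ((α s).testAgainstNN f : ℝ) := by exact_mod_cast h2
      linarith
    have hev : (fun s => ((α s).testAgainstNN f : ℝ) - ((β s).testAgainstNN f : ℝ))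
        =ᶠ[𝓝[Set.Ici 0] t] (fun s => ((ξ s).testAgainstNN f : ℝ)) := by
      filter_upwards [eventually_mem_nhdsWithin] with s hs
      exact (hdecomp s hs).symm
    have hlim : Tendsto (fun s => ((ξ s).testAgainstNN f : ℝ)) (𝓝[Set.Ici 0] t)
        (𝓝 (((α t).testAgainstNN f : ℝ) - ((β t).testAgainstNN f : ℝ))) :=
      (hA.sub hB).congr' hev
    rw [hdecomp t ht']
    exact hlim
  exact ⟨hξcont, hβcont, hιcont⟩

end
end
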